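/- arXiv:2309.11007 — 6 statements merged into one kernel-verified Lean document; each statement's English description precedes it below -/
import Mathlib

section
/- If X ~ Binomial(n,p) and Y ~ Poisson(np), and k, np ≤ √n, then P(X = k) = (1 + O((k² + (np)² + 1)/n)) · P(Y = k). More precisely, there is an absolute constant C such that whenever k ≤ √n and np ≤ √n, |P(X = k) − P(Y = k)| ≤ C · ((k² + (np)² + 1)/n) · P(Y = k). -/
/-!
Write `P(X = k) = P(Y = k) · R` with `R = e^{np} (1 - p)^{n-k} ∏_{i<k} (1 - i/n)`.
From `1 - p ≤ e^{-p}` and `∏ (1 - i/n) ≤ 1` we get `R ≤ e^{kp} ≤ 1 + 2kp`, using `kp ≤ 1`.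
From `e^p (1 - p) ≥ 1 - p²`, Bernoulli's inequality and the Weierstrass product inequality
`∏ (1 - aᵢ) ≥ 1 - ∑ aᵢ` we get `R ≥ 1 - np² - k²/n`. Since `2kp ≤ (k² + (np)²)/n` by AM-GM,
`|R - 1| ≤ (k² + (np)²)/n`, so the constant `C = 1` works.
-/

/-- The probability that a Binomial(n,p) random variable equals `k`. -/
noncomputable def binomialPMFReal (n : ℕ) (p : ℝ) (k : ℕ) : ℝ :=
  (n.choose k : ℝ) * p ^ k * (1 - p) ^ (n - k)

/-- The probability that a Poisson(μ) random variable equals `k`. -/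
noncomputable def poissonProb (μ : ℝ) (k : ℕ) : ℝ :=
  Real.exp (-μ) * μ ^ k / (Nat.factorial k : ℝ)

open Finset Real

section

variable {R : Type*} [CommRing R] [LinearOrder R] [IsStrictOrderedRing R]

lemma one_sub_add_le_mul {a b x y : R} (ha : 0 ≤ a) (hb : 0 ≤ b) (hx0 : 0 ≤ x) (hy0 : 0 ≤ y)
    (hx : 1 - a ≤ x) (hy : 1 - b ≤ y) : 1 - (a + b) ≤ x * y := by
  rcases le_or_gt a 1 with ha1 | ha1
  · rcases le_or_gt b 1 with hb1 | hb1
    · nlinarith [mul_le_mul hx hy (by linarith) hx0]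
    · nlinarith [mul_nonneg hx0 hy0]
  · nlinarith [mul_nonneg hx0 hy0]

lemma one_sub_sum_le_prod_one_sub {ι : Type*} (s : Finset ι) {f : ι → R}
    (hf0 : ∀ i ∈ s, 0 ≤ f i) (hf1 : ∀ i ∈ s, f i ≤ 1) :
    1 - ∑ i ∈ s, f i ≤ ∏ i ∈ s, (1 - f i) := by
  classical
  induction s using Finset.induction_on with
  | empty => simp
  | insert a s ha ih =>
    rw [sum_insert ha, prod_insert ha]
    simp only [mem_insert, forall_eq_or_imp] at hf0 hf1
    exact one_sub_add_le_mul hf0.1 (sum_nonneg hf0.2) (sub_nonneg.2 hf1.1)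
      (prod_nonneg fun i hi => sub_nonneg.2 (hf1.2 i hi)) le_rfl (ih hf0.2 hf1.2)

end

lemma one_sub_mul_sq_le_exp_mul_one_sub_pow {p : ℝ} (hp0 : 0 ≤ p) (hp1 : p ≤ 1) (m : ℕ) :
    1 - m * p ^ 2 ≤ (exp p * (1 - p)) ^ m := by
  have h : 1 - p ^ 2 ≤ exp p * (1 - p) := by
    nlinarith [add_one_le_exp p, mul_le_mul_of_nonneg_right (add_one_le_exp p) (sub_nonneg.2 hp1)]
  calc 1 - m * p ^ 2 = 1 + m * (-p ^ 2) := by ring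
    _ ≤ (1 + -p ^ 2) ^ m := one_add_mul_le_pow (by nlinarith) m
    _ ≤ (exp p * (1 - p)) ^ m := pow_le_pow_left₀ (by nlinarith) (by linarith) m

lemma Nat.cast_descFactorial_eq_pow_mul_prod {n k : ℕ} (hk : k ≤ n) :
    (n.descFactorial k : ℝ) = n ^ k * ∏ i ∈ range k, (1 - (i : ℝ) / n) := by
  rw [Nat.descFactorial_eq_prod_range, Nat.cast_prod, ← card_range k, ← prod_const,
    card_range, ← prod_mul_distrib]
  refine prod_congr rfl fun i hi => ?_
  have hin : i < n := (mem_range.1 hi).trans_le hk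
  have hn : (n : ℝ) ≠ 0 := Nat.cast_ne_zero.2 (by omega)
  rw [Nat.cast_sub hin.le]
  field_simp

noncomputable def binomialPoissonRatio (n : ℕ) (p : ℝ) (k : ℕ) : ℝ :=
  exp (n * p) * (1 - p) ^ (n - k) * ∏ i ∈ range k, (1 - (i : ℝ) / n)

lemma binomialPMFReal_eq_poissonProb_mul_binomialPoissonRatio {n k : ℕ} (p : ℝ) (hk : k ≤ n) :
    binomialPMFReal n p k = poissonProb (n * p) k * binomialPoissonRatio n p k := by
  have hchoose : (n.choose k : ℝ) * k.factorial = n ^ k * ∏ i ∈ range k, (1 - (i : ℝ) / n) := by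
    rw [← Nat.cast_descFactorial_eq_pow_mul_prod hk, Nat.descFactorial_eq_factorial_mul_choose]
    push_cast; ring
  unfold binomialPMFReal poissonProb binomialPoissonRatio
  rw [exp_neg]
  field_simp
  linear_combination (p ^ k * (1 - p) ^ (n - k)) * hchoose

lemma poissonProb_nonneg {μ : ℝ} (hμ : 0 ≤ μ) (k : ℕ) : 0 ≤ poissonProb μ k := by
  unfold poissonProb; positivity

lemma one_sub_div_nonneg_of_mem_range {n k i : ℕ} (hk : k ≤ n) (hi : i ∈ range k) :
    0 ≤ 1 - (i : ℝ) / n :=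
  sub_nonneg.2 <|
    div_le_one_of_le₀ (by exact_mod_cast ((mem_range.1 hi).le.trans hk)) (Nat.cast_nonneg n)

lemma binomialPoissonRatio_le_exp {n k : ℕ} {p : ℝ} (hp1 : p ≤ 1) (hk : k ≤ n) :
    binomialPoissonRatio n p k ≤ exp (k * p) := by
  have hpow : (1 - p) ^ (n - k) ≤ exp (-p) ^ (n - k) :=
    pow_le_pow_left₀ (sub_nonneg.2 hp1) (by linarith [add_one_le_exp (-p)]) _
  have hprod : ∏ i ∈ range k, (1 - (i : ℝ) / n) ≤ 1 :=
    prod_le_one (fun i hi => one_sub_div_nonneg_of_mem_range hk hi)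
      (fun i _ => sub_le_self _ (by positivity))
  calc binomialPoissonRatio n p k ≤ exp (n * p) * exp (-p) ^ (n - k) * 1 := by
        unfold binomialPoissonRatio
        gcongr
        exact prod_nonneg fun i hi => one_sub_div_nonneg_of_mem_range hk hi
    _ = exp (k * p) := by
        rw [mul_one, ← exp_nat_mul, ← exp_add, Nat.cast_sub hk]
        ring_nf

lemma one_sub_le_binomialPoissonRatio {n k : ℕ} {p : ℝ} (hp0 : 0 ≤ p) (hp1 : p ≤ 1)
    (hk : k ≤ n) : 1 - (n * p ^ 2 + (k : ℝ) ^ 2 / n) ≤ binomialPoissonRatio n p k := by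
  have hsplit : binomialPoissonRatio n p k =
      exp (k * p) * ((exp p * (1 - p)) ^ (n - k) * ∏ i ∈ range k, (1 - (i : ℝ) / n)) := by
    have hexp : exp (n * p) = exp (k * p) * exp p ^ (n - k) := by
      rw [← exp_nat_mul, ← exp_add, Nat.cast_sub hk]
      ring_nf
    rw [binomialPoissonRatio, hexp, mul_pow]
    ring
  have hsum : ∑ i ∈ range k, (i : ℝ) / n ≤ (k : ℝ) ^ 2 / n := by
    rw [← sum_div]
    gcongr
    calc ∑ i ∈ range k, (i : ℝ) ≤ ∑ _i ∈ range k, (k : ℝ) :=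
          sum_le_sum fun i hi => by exact_mod_cast (mem_range.1 hi).le
      _ = (k : ℝ) ^ 2 := by simp [sq]
  have hpow : 1 - n * p ^ 2 ≤ (exp p * (1 - p)) ^ (n - k) := by
    have : ((n - k : ℕ) : ℝ) * p ^ 2 ≤ n * p ^ 2 := by gcongr; exact_mod_cast Nat.sub_le n k
    linarith [one_sub_mul_sq_le_exp_mul_one_sub_pow hp0 hp1 (n - k)]
  have hprod : 1 - (k : ℝ) ^ 2 / n ≤ ∏ i ∈ range k, (1 - (i : ℝ) / n) := by
    have := one_sub_sum_le_prod_one_sub (range k) (f := fun i : ℕ => (i : ℝ) / n)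
      (fun i _ => by positivity)
      (fun i hi => by linarith [one_sub_div_nonneg_of_mem_range hk hi])
    linarith
  have hpow0 : 0 ≤ (exp p * (1 - p)) ^ (n - k) :=
    pow_nonneg (mul_nonneg (exp_pos p).le (sub_nonneg.2 hp1)) _
  have hprod0 : 0 ≤ ∏ i ∈ range k, (1 - (i : ℝ) / n) :=
    prod_nonneg fun i hi => one_sub_div_nonneg_of_mem_range hk hi
  calc 1 - (n * p ^ 2 + (k : ℝ) ^ 2 / n)
      ≤ (exp p * (1 - p)) ^ (n - k) * ∏ i ∈ range k, (1 - (i : ℝ) / n) :=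
        one_sub_add_le_mul (by positivity) (by positivity) hpow0 hprod0 hpow hprod
    _ ≤ binomialPoissonRatio n p k := by
        rw [hsplit]
        exact le_mul_of_one_le_left (mul_nonneg hpow0 hprod0) (one_le_exp (by positivity))

lemma abs_binomialPoissonRatio_sub_one_le {n k : ℕ} {p : ℝ} (hn : 0 < n) (hp0 : 0 ≤ p)
    (hp1 : p ≤ 1) (hk : k ≤ n) (hkp : k * p ≤ 1) :
    |binomialPoissonRatio n p k - 1| ≤ ((k : ℝ) ^ 2 + (n * p) ^ 2) / n := by
  have hn' : (0 : ℝ) < n := by exact_mod_cast hn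
  have hkp0 : 0 ≤ k * p := by positivity
  have hupper : exp (k * p) - 1 ≤ 2 * (k * p) := by
    have := abs_exp_sub_one_le (x := k * p) (by rwa [abs_of_nonneg hkp0])
    rw [abs_of_nonneg hkp0] at this
    exact (le_abs_self _).trans this
  have hamgm : 2 * (k * p) ≤ ((k : ℝ) ^ 2 + (n * p) ^ 2) / n := by
    rw [le_div_iff₀ hn']
    nlinarith [sq_nonneg ((k : ℝ) - n * p)]
  have hlower : n * p ^ 2 + (k : ℝ) ^ 2 / n = ((k : ℝ) ^ 2 + (n * p) ^ 2) / n := by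
    field_simp
    ring
  rw [abs_le]
  constructor
  · linarith [one_sub_le_binomialPoissonRatio hp0 hp1 hk (n := n)]
  · linarith [binomialPoissonRatio_le_exp hp1 hk (n := n)]

/-- If `X ~ Binomial(n,p)` and `Y ~ Poisson(np)`, and `k, np ≤ √n`, then
`P(X = k) = (1 + O((k² + (np)² + 1)/n)) · P(Y = k)`: there is an absolute constant `C`
such that `|P(X = k) − P(Y = k)| ≤ C·((k² + (np)² + 1)/n)·P(Y = k)`. -/
theorem binomial_poisson_comparison :
    ∃ C : ℝ, 0 < C ∧
      ∀ (n k : ℕ) (p : ℝ), 0 < n → 0 ≤ p → p ≤ 1 →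
        (k : ℝ) ≤ Real.sqrt n → (n : ℝ) * p ≤ Real.sqrt n →
        |binomialPMFReal n p k - poissonProb ((n : ℝ) * p) k| ≤
          C * (((k : ℝ) ^ 2 + ((n : ℝ) * p) ^ 2 + 1) / n) * poissonProb ((n : ℝ) * p) k := by
  refine ⟨1, one_pos, fun n k p hn hp0 hp1 hks hnps => ?_⟩
  have hn' : (0 : ℝ) < n := by exact_mod_cast hn
  have hk : k ≤ n := by
    have : (k : ℝ) ^ 2 ≤ n := (Real.le_sqrt (Nat.cast_nonneg k) hn'.le).1 hks
    exact (Nat.le_self_pow two_ne_zero k).trans (by exact_mod_cast this)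
  have hkp : k * p ≤ 1 := by
    have : (k * p) * n ≤ 1 * n := by
      calc (k * p) * n = k * (n * p) := by ring
        _ ≤ √n * √n := mul_le_mul hks hnps (by positivity) (by positivity)
        _ = 1 * n := by rw [one_mul, Real.mul_self_sqrt hn'.le]
    exact le_of_mul_le_mul_right this hn'
  have hP := poissonProb_nonneg (mul_nonneg hn'.le hp0) k
  rw [binomialPMFReal_eq_poissonProb_mul_binomialPoissonRatio p hk, ← mul_sub_one, abs_mul,
    abs_of_nonneg hP, one_mul, mul_comm]
  gcongr
  calc |binomialPoissonRatio n p k - 1| ≤ ((k : ℝ) ^ 2 + (n * p) ^ 2) / n :=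
        abs_binomialPoissonRatio_sub_one_le hn hp0 hp1 hk hkp
    _ ≤ ((k : ℝ) ^ 2 + (n * p) ^ 2 + 1) / n :=
        div_le_div_of_nonneg_right (le_add_of_nonneg_right zero_le_one) hn'.le
end

section
/- Let M be a real symmetric n×n matrix, λ ∈ ℝ, and Δ, ε > 0 with 5ε ≤ Δ. Assume M has a unique eigenvalue μ in the interval [λ−Δ, λ+Δ], with corresponding unit eigenvector w. If v is a unit vector with ‖(M − λI)v‖ ≤ ε, then μ − λ = ⟨v, (M−λI)v⟩ + O(ε²/Δ) and, for a suitable choice of sign of w, ‖w − v‖ = O(ε/Δ). Explicitly, there is an absolute constant C with |μ − λ − ⟨v,(M−λ)v⟩| ≤ C ε²/Δ and min_{σ=±1} ‖σw − v‖ ≤ C ε/Δ. -/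
open scoped RealInnerProductSpace

/-- The action of a matrix on a vector of `EuclideanSpace ℝ (Fin n)`. -/
noncomputable def matVec {n : ℕ} (M : Matrix (Fin n) (Fin n) ℝ)
    (v : EuclideanSpace ℝ (Fin n)) : EuclideanSpace ℝ (Fin n) :=
  (WithLp.equiv 2 (Fin n → ℝ)).symm (M.mulVec (WithLp.equiv 2 (Fin n → ℝ) v))

/-!
Expand `v` in an orthonormal eigenbasis `bᵢ` of `M` and put `pᵢ = ⟪bᵢ, v⟫²`, a probability
vector, and `xᵢ = dᵢ - λ` for the eigenvalues `dᵢ`. Then `‖(M - λ)v‖² = ∑ xᵢ² pᵢ ≤ ε²` and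
`⟪v, (M - λ)v⟫ = ∑ xᵢ pᵢ`, while the gap gives `|xᵢ| ≥ Δ` for every `i` except the index `i₀`
of `μ`. Hence the mass off `i₀` is at most `ε²/Δ²`, and since `|x_{i₀} - xᵢ| ≤ 2|xᵢ| ≤ 2xᵢ²/Δ`
off `i₀`, the mean `∑ xᵢ pᵢ` is within `2ε²/Δ` of `μ - λ = x_{i₀}`. Simplicity of `μ` forces
`w = ±b_{i₀}`, so `⟪w, v⟫² = p_{i₀} ≥ 1 - ε²/Δ²`, and the appropriate sign of `w` is within
`2ε/Δ` of `v`.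
-/

open Finset

section GapBounds

variable {ι : Type*} [Fintype ι] {p x : ι → ℝ} {i₀ : ι} {Δ ε : ℝ}

theorem sq_mul_one_sub_le_of_gap (hp : ∀ i, 0 ≤ p i) (hp1 : ∑ i, p i = 1)
    (hΔ : 0 ≤ Δ) (hgap : ∀ i, i ≠ i₀ → Δ ≤ |x i|) (hvar : ∑ i, x i ^ 2 * p i ≤ ε ^ 2) :
    Δ ^ 2 * (1 - p i₀) ≤ ε ^ 2 := by
  classical
  have hrest : 1 - p i₀ = ∑ i ∈ univ.erase i₀, p i := by
    rw [← hp1, ← add_sum_erase _ _ (mem_univ i₀), add_sub_cancel_left]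
  calc Δ ^ 2 * (1 - p i₀) = ∑ i ∈ univ.erase i₀, Δ ^ 2 * p i := by rw [hrest, mul_sum]
    _ ≤ ∑ i ∈ univ.erase i₀, x i ^ 2 * p i := by
        refine sum_le_sum fun i hi => mul_le_mul_of_nonneg_right ?_ (hp i)
        rw [← sq_abs (x i)]
        exact pow_le_pow_left₀ hΔ (hgap i (ne_of_mem_erase hi)) 2
    _ ≤ ∑ i, x i ^ 2 * p i :=
        sum_le_sum_of_subset_of_nonneg (erase_subset _ _) fun i _ _ =>
          mul_nonneg (sq_nonneg _) (hp i)
    _ ≤ ε ^ 2 := hvar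

theorem abs_sub_sum_mul_le_of_gap (hp : ∀ i, 0 ≤ p i) (hp1 : ∑ i, p i = 1)
    (hΔ : 0 < Δ) (hx₀ : |x i₀| ≤ Δ) (hgap : ∀ i, i ≠ i₀ → Δ ≤ |x i|)
    (hvar : ∑ i, x i ^ 2 * p i ≤ ε ^ 2) :
    |x i₀ - ∑ i, x i * p i| ≤ 2 * ε ^ 2 / Δ := by
  have hterm : ∀ i, |x i₀ - x i| * p i ≤ 2 / Δ * (x i ^ 2 * p i) := by
    intro i
    rcases eq_or_ne i i₀ with rfl | hi
    · rw [sub_self, abs_zero, zero_mul]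
      exact mul_nonneg (by positivity) (mul_nonneg (sq_nonneg _) (hp _))
    · have hΔi := hgap i hi
      -- `|x i₀ - x i| ≤ 2 |x i| ≤ 2 x i ^ 2 / Δ` away from `i₀`
      have hdiff : |x i₀ - x i| ≤ 2 / Δ * x i ^ 2 := by
        rw [div_mul_eq_mul_div, le_div_iff₀ hΔ, ← sq_abs (x i)]
        nlinarith [abs_sub (x i₀) (x i), abs_nonneg (x i)]
      exact (mul_le_mul_of_nonneg_right hdiff (hp i)).trans_eq (mul_assoc _ _ _)
  calc |x i₀ - ∑ i, x i * p i| = |∑ i, (x i₀ - x i) * p i| := by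
        simp only [sub_mul, sum_sub_distrib, ← mul_sum, hp1, mul_one]
    _ ≤ ∑ i, |x i₀ - x i| * p i := by
        refine (abs_sum_le_sum_abs _ _).trans_eq (sum_congr rfl fun i _ => ?_)
        rw [abs_mul, abs_of_nonneg (hp i)]
    _ ≤ ∑ i, 2 / Δ * (x i ^ 2 * p i) := sum_le_sum fun i _ => hterm i
    _ ≤ 2 * ε ^ 2 / Δ := by
        rw [← mul_sum, div_mul_eq_mul_div]
        gcongr

end GapBounds

namespace LinearMap.IsSymmetric

variable {ι E : Type*} [Fintype ι] [NormedAddCommGroup E] [InnerProductSpace ℝ E]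
  {T : E →ₗ[ℝ] E} {b : OrthonormalBasis ι ℝ E} {d : ι → ℝ}

theorem inner_apply_of_eigenbasis (hT : T.IsSymmetric) (hTb : ∀ i, T (b i) = d i • b i)
    (i : ι) (x : E) : ⟪b i, T x⟫ = d i * ⟪b i, x⟫ := by
  rw [← hT, hTb, real_inner_smul_left]

theorem norm_apply_sq_of_eigenbasis (hT : T.IsSymmetric) (hTb : ∀ i, T (b i) = d i • b i)
    (x : E) : ‖T x‖ ^ 2 = ∑ i, d i ^ 2 * ⟪b i, x⟫ ^ 2 := by
  rw [← b.sum_sq_inner_right]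
  simp only [hT.inner_apply_of_eigenbasis hTb, mul_pow]

theorem inner_self_apply_of_eigenbasis (hT : T.IsSymmetric) (hTb : ∀ i, T (b i) = d i • b i)
    (x : E) : ⟪x, T x⟫ = ∑ i, d i * ⟪b i, x⟫ ^ 2 := by
  rw [← b.sum_inner_mul_inner]
  refine Finset.sum_congr rfl fun i _ => ?_
  rw [hT.inner_apply_of_eigenbasis hTb, real_inner_comm x]
  ring

theorem inner_eigenbasis_eq_zero (hT : T.IsSymmetric) (hTb : ∀ i, T (b i) = d i • b i)
    {μ : ℝ} {w : E} (hw : T w = μ • w) {i : ι} (hi : d i ≠ μ) : ⟪b i, w⟫ = 0 := by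
  have h := hT.inner_apply_of_eigenbasis hTb i w
  rw [hw, real_inner_smul_right] at h
  exact (mul_eq_zero.1 (by linear_combination h : (μ - d i) * ⟪b i, w⟫ = 0)).resolve_left
    (sub_ne_zero.2 hi.symm)

theorem exists_eigenvalue_eq (hT : T.IsSymmetric) (hTb : ∀ i, T (b i) = d i • b i)
    {μ : ℝ} {w : E} (hw : T w = μ • w) (hw0 : w ≠ 0) : ∃ i, d i = μ := by
  by_contra! h
  refine hw0 (norm_eq_zero.1 (pow_eq_zero_iff two_ne_zero |>.1 ?_))
  rw [← b.sum_sq_inner_right]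
  exact Finset.sum_eq_zero fun i _ => by rw [hT.inner_eigenbasis_eq_zero hTb hw (h i)]; ring

theorem eigenvalue_eq_of_simple (hT : T.IsSymmetric) (hTb : ∀ i, T (b i) = d i • b i)
    {μ : ℝ} {w : E} (hw : T w = μ • w) (hw0 : w ≠ 0) {i₀ : ι}
    (hsimple : ∀ i, i ≠ i₀ → d i ≠ μ) : d i₀ = μ := by
  obtain ⟨j, hj⟩ := hT.exists_eigenvalue_eq hTb hw hw0
  by_contra h
  exact hsimple j (fun hji => h (hji ▸ hj)) hj

-- `w` is a multiple of `b i₀`, all its other coordinates vanishing.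
theorem inner_sq_eq_of_simple (hT : T.IsSymmetric) (hTb : ∀ i, T (b i) = d i • b i)
    {μ : ℝ} {w : E} (hw : T w = μ • w) {i₀ : ι} (hsimple : ∀ i, i ≠ i₀ → d i ≠ μ) (v : E) :
    ⟪w, v⟫ ^ 2 = ‖w‖ ^ 2 * ⟪b i₀, v⟫ ^ 2 := by
  have hzero : ∀ i, i ≠ i₀ → ⟪b i, w⟫ = 0 := fun i hi =>
    hT.inner_eigenbasis_eq_zero hTb hw (hsimple i hi)
  have hwv : ⟪w, v⟫ = ⟪b i₀, w⟫ * ⟪b i₀, v⟫ := by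
    rw [← b.sum_inner_mul_inner, Finset.sum_eq_single i₀
      (fun i _ hi => by rw [real_inner_comm, hzero i hi, zero_mul]) (by simp),
      real_inner_comm]
  have hww : ‖w‖ ^ 2 = ⟪b i₀, w⟫ ^ 2 := by
    rw [← b.sum_sq_inner_right, Finset.sum_eq_single i₀
      (fun i _ hi => by rw [hzero i hi, sq, zero_mul]) (by simp)]
  rw [hwv, hww, mul_pow]

end LinearMap.IsSymmetric

theorem norm_sub_le_of_inner_nonneg {E : Type*} [NormedAddCommGroup E] [InnerProductSpace ℝ E]
    {u v : E} {Δ ε : ℝ} (hu : ‖u‖ = 1) (hv : ‖v‖ = 1) (huv : 0 ≤ ⟪u, v⟫) (hΔ : 0 < Δ)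
    (hε : 0 ≤ ε) (hangle : Δ ^ 2 * (1 - ⟪u, v⟫ ^ 2) ≤ ε ^ 2) : ‖u - v‖ ≤ 2 * ε / Δ := by
  have huv1 : ⟪u, v⟫ ≤ 1 := (real_inner_le_norm u v).trans_eq (by rw [hu, hv, one_mul])
  -- `2 - 2c ≤ 2 (1 - c²)` for `c = ⟪u, v⟫ ∈ [0, 1]`
  have hsq : ‖u - v‖ ^ 2 ≤ 2 * (1 - ⟪u, v⟫ ^ 2) := by
    rw [norm_sub_sq_real, hu, hv]
    nlinarith
  rw [le_div_iff₀ hΔ, ← pow_le_pow_iff_left₀ (by positivity) (by positivity) two_ne_zero]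
  nlinarith

theorem norm_sub_le_or_norm_neg_sub_le {E : Type*} [NormedAddCommGroup E]
    [InnerProductSpace ℝ E] {w v : E} {Δ ε : ℝ} (hw : ‖w‖ = 1) (hv : ‖v‖ = 1) (hΔ : 0 < Δ)
    (hε : 0 ≤ ε) (hangle : Δ ^ 2 * (1 - ⟪w, v⟫ ^ 2) ≤ ε ^ 2) :
    ‖w - v‖ ≤ 2 * ε / Δ ∨ ‖(-w) - v‖ ≤ 2 * ε / Δ := by
  rcases le_total 0 ⟪w, v⟫ with hwv | hwv
  · exact Or.inl (norm_sub_le_of_inner_nonneg hw hv hwv hΔ hε hangle)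
  · refine Or.inr (norm_sub_le_of_inner_nonneg (by rwa [norm_neg]) hv ?_ hΔ hε ?_) <;>
      rw [inner_neg_left]
    · exact neg_nonneg.2 hwv
    · rwa [neg_sq]

theorem Matrix.IsHermitian.toEuclideanLin_eigenvectorBasis {n : Type*} [Fintype n]
    [DecidableEq n] {M : Matrix n n ℝ} (hM : M.IsHermitian) (i : n) :
    Matrix.toEuclideanLin M (hM.eigenvectorBasis i) =
      hM.eigenvalues i • hM.eigenvectorBasis i := by
  simpa [Matrix.toLpLin_apply] using congrArg (WithLp.toLp 2) (hM.mulVec_eigenvectorBasis i)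

/-- Approximate eigenvalue/eigenvector lemma: let `M` be a real symmetric `n×n` matrix and
`Δ, ε > 0` with `5ε ≤ Δ`. Suppose `M` has a unique eigenvalue `μ` (with multiplicity) in
`[λ−Δ, λ+Δ]` with unit eigenvector `w`. If `v` is a unit vector with `‖(M−λ)v‖ ≤ ε`, then
`|μ − λ − ⟨v,(M−λ)v⟩| ≤ Cε²/Δ` and, up to sign, `‖w − v‖ ≤ Cε/Δ`, for an absolute
constant `C`. -/
theorem approximate_eigenvector :
    ∃ C : ℝ, 0 < C ∧
      ∀ (n : ℕ) (M : Matrix (Fin n) (Fin n) ℝ) (hM : M.IsHermitian)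
        (lam Δ ε μ : ℝ) (w v : EuclideanSpace ℝ (Fin n)),
        0 < ε → 5 * ε ≤ Δ →
        (∃! i : Fin n, hM.eigenvalues i ∈ Set.Icc (lam - Δ) (lam + Δ)) →
        μ ∈ Set.Icc (lam - Δ) (lam + Δ) →
        matVec M w = μ • w → ‖w‖ = 1 → ‖v‖ = 1 →
        ‖matVec M v - lam • v‖ ≤ ε →
        |μ - lam - ⟪v, matVec M v - lam • v⟫| ≤ C * ε ^ 2 / Δ ∧
          (‖w - v‖ ≤ C * ε / Δ ∨ ‖(-w) - v‖ ≤ C * ε / Δ) := by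
  refine ⟨2, two_pos, ?_⟩
  intro n M hM lam Δ ε μ w v hε hεΔ ⟨i₀, hi₀, hunique⟩ hμ hw hw1 hv1 hres
  have hΔ : 0 < Δ := by linarith
  set d := hM.eigenvalues
  set b := hM.eigenvectorBasis
  set A := Matrix.toEuclideanLin M
  have hA : A.IsSymmetric := Matrix.isSymmetric_toEuclideanLin_iff.2 hM
  have hsimple : ∀ i, i ≠ i₀ → d i ≠ μ := fun i hi h =>
    hi (hunique i (show d i ∈ Set.Icc _ _ from h ▸ hμ))
  have hμ₀ : d i₀ = μ := hA.eigenvalue_eq_of_simple hM.toEuclideanLin_eigenvectorBasis hw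
    (norm_ne_zero_iff.1 (by simp [hw1])) hsimple
  have hgap : ∀ i, i ≠ i₀ → Δ ≤ |d i - lam| := fun i hi => by
    rw [abs_sub_comm]
    exact (not_le.1 (mt Set.mem_Icc_iff_abs_le.1 (mt (hunique i) hi))).le
  set T := A - lam • LinearMap.id
  have hT : T.IsSymmetric := hA.sub (LinearMap.IsSymmetric.id.smul rfl)
  have hTb : ∀ i, T (b i) = (d i - lam) • b i := fun i => by
    rw [sub_smul, ← hM.toEuclideanLin_eigenvectorBasis]
    rfl
  have hTv : T v = matVec M v - lam • v := rfl
  have hvar : ∑ i, (d i - lam) ^ 2 * ⟪b i, v⟫ ^ 2 ≤ ε ^ 2 := by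
    rw [← hT.norm_apply_sq_of_eigenbasis hTb, hTv]
    exact pow_le_pow_left₀ (norm_nonneg _) hres 2
  have hp1 : ∑ i, ⟪b i, v⟫ ^ 2 = 1 := by rw [b.sum_sq_inner_right, hv1, one_pow]
  constructor
  · rw [← hTv, hT.inner_self_apply_of_eigenbasis hTb, ← hμ₀]
    exact abs_sub_sum_mul_le_of_gap (fun i => sq_nonneg _) hp1 hΔ
      (by rw [abs_sub_comm]; exact Set.mem_Icc_iff_abs_le.2 hi₀) hgap hvar
  · refine norm_sub_le_or_norm_neg_sub_le hw1 hv1 hΔ hε.le ?_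
    rw [hA.inner_sq_eq_of_simple hM.toEuclideanLin_eigenvectorBasis hw hsimple, hw1, one_pow,
      one_mul]
    exact sq_mul_one_sub_le_of_gap (p := fun i => ⟪b i, v⟫ ^ 2) (fun i => sq_nonneg _) hp1
      hΔ.le hgap hvar
end

section
/- Let T be a finite tree rooted at x, with adjacency matrix A, and let λ > 0 be an eigenvalue with an eigenvector w that is nonzero at every vertex. Then λ satisfies the continued-fraction identity λ = Σ_{y₁∼x} 1/(λ − Σ_{y₂ child of y₁} 1/(λ − Σ_{y₃ child of y₂} 1/(λ − ···))), where the continued fraction terminates at the leaves (empty sums), and all denominators appearing are nonzero. -/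
/-!
Root the tree at `x` and write `p(v)` for the parent of a vertex `v ≠ x`. The ratios
`g v = w v / w (p v)` are the levels of the continued fraction: the neighbours of `v ≠ x` are
`p(v)` and its children, so the eigenvalue equation at `v`, divided by `w v`, reads
`λ - Σ_{y child of v} g y = w (p v) / w v = 1 / g v`, and at the root, whose neighbours are all
its children, it reads `λ = Σ_{y ∼ x} g y`.
-/

/-- In the graph `G` viewed as rooted at `x`, the children of `v`: neighbors of `v`
strictly farther from the root `x`. -/
noncomputable def rootedChildren {V : Type*} [Fintype V] [DecidableEq V] (G : SimpleGraph V)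
    [DecidableRel G.Adj] (x v : V) : Finset V :=
  (G.neighborFinset v).filter fun y => G.dist x v < G.dist x y

open Finset

namespace SimpleGraph

variable {V : Type*} {G : SimpleGraph V} {x u u' v y : V}

lemma Reachable.exists_adj_dist_add_one (hr : G.Reachable x v) (hv : v ≠ x) :
    ∃ u, G.Adj u v ∧ G.dist x u + 1 = G.dist x v := by
  obtain ⟨p, hp⟩ := hr.symm.exists_walk_length_eq_dist
  cases p with
  | nil => exact absurd rfl hv
  | cons h q =>
    refine ⟨_, h.symm, ?_⟩
    have hle := dist_le q.reverse
    have hdiff := h.diff_dist_adj (u := x)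
    rw [Walk.length_cons, dist_comm] at hp
    rw [Walk.length_reverse] at hle
    lia

lemma IsAcyclic.eq_of_adj_of_dist_add_one (hG : G.IsAcyclic) (hu : G.Adj u v)
    (hu' : G.Adj u' v) (hdu : G.dist x u + 1 = G.dist x v) (hdu' : G.dist x u' + 1 = G.dist x v) :
    u = u' := by
  have hxv : G.Reachable x v := Reachable.of_dist_ne_zero (by lia)
  obtain ⟨p, hp⟩ := (hxv.trans hu.symm.reachable).exists_walk_length_eq_dist
  obtain ⟨p', hp'⟩ := (hxv.trans hu'.symm.reachable).exists_walk_length_eq_dist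
  -- both extensions are shortest walks to `v`, hence paths, hence equal
  have hpath := (p.concat hu).isPath_of_length_eq_dist (by rw [Walk.length_concat, hp, hdu])
  have hpath' := (p'.concat hu').isPath_of_length_eq_dist (by rw [Walk.length_concat, hp', hdu'])
  have heq := congrArg Subtype.val ((hG.subsingleton_path x v).elim ⟨_, hpath⟩ ⟨_, hpath'⟩)
  exact (Walk.concat_inj heq).1

open Classical in
/-- Junk value `v` when `v` has no neighbour closer to `x`, e.g. for the root `v = x`. -/
noncomputable def rootedParent (G : SimpleGraph V) (x v : V) : V :=
  if h : ∃ u, G.Adj u v ∧ G.dist x u + 1 = G.dist x v then h.choose else v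

lemma Reachable.rootedParent_spec (hr : G.Reachable x v) (hv : v ≠ x) :
    G.Adj (G.rootedParent x v) v ∧ G.dist x (G.rootedParent x v) + 1 = G.dist x v := by
  have h := hr.exists_adj_dist_add_one hv
  rw [rootedParent, dif_pos h]
  exact h.choose_spec

lemma IsAcyclic.rootedParent_eq (hG : G.IsAcyclic) (hu : G.Adj u v)
    (hdu : G.dist x u + 1 = G.dist x v) : G.rootedParent x v = u := by
  have hxv : G.Reachable x v := Reachable.of_dist_ne_zero (by lia)
  have hv : v ≠ x := by rintro rfl; simp at hdu
  obtain ⟨hadj, hdist⟩ := hxv.rootedParent_spec hv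
  exact hG.eq_of_adj_of_dist_add_one hadj hu hdist hdu

variable [Fintype V] [DecidableEq V] [DecidableRel G.Adj]

lemma IsAcyclic.rootedParent_of_mem_rootedChildren (hG : G.IsAcyclic)
    (hy : y ∈ rootedChildren G x v) : G.rootedParent x y = v := by
  simp only [rootedChildren, mem_filter, mem_neighborFinset] at hy
  obtain ⟨hadj, hlt⟩ := hy
  refine hG.rootedParent_eq hadj ?_
  have := hadj.diff_dist_adj (u := x)
  lia

lemma neighborFinset_eq_rootedChildren_self : G.neighborFinset x = rootedChildren G x x := by
  refine (filter_true_of_mem fun y hy => ?_).symm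
  rw [mem_neighborFinset, ← dist_eq_one_iff_adj] at hy
  simp [hy]

lemma IsTree.neighborFinset_eq_insert_rootedParent (hG : G.IsTree) (hv : v ≠ x) :
    G.neighborFinset v = insert (G.rootedParent x v) (rootedChildren G x v) := by
  have hadj := ((hG.connected x v).rootedParent_spec hv).1
  ext u
  simp only [mem_insert, rootedChildren, mem_filter, mem_neighborFinset]
  constructor
  · intro hu
    by_cases hlt : G.dist x v < G.dist x u
    · exact Or.inr ⟨hu, hlt⟩
    · have hne := hG.dist_ne_of_adj x hu
      have hdiff := hu.diff_dist_adj (u := x)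
      exact Or.inl (hG.isAcyclic.rootedParent_eq (x := x) hu.symm (by lia)).symm
  · rintro (rfl | ⟨hu, -⟩)
    exacts [hadj.symm, hu]

lemma IsTree.rootedParent_notMem_rootedChildren (hG : G.IsTree) (hv : v ≠ x) :
    G.rootedParent x v ∉ rootedChildren G x v := by
  have hdist := ((hG.connected x v).rootedParent_spec hv).2
  simp only [rootedChildren, mem_filter, not_and, not_lt]
  lia

lemma IsTree.sum_rootedChildren_eq_sub {R : Type*} [AddCommGroup R] (hG : G.IsTree) (hv : v ≠ x)
    (f : V → R) :
    ∑ y ∈ rootedChildren G x v, f y = ∑ y ∈ G.neighborFinset v, f y - f (G.rootedParent x v) := by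
  rw [hG.neighborFinset_eq_insert_rootedParent hv,
    sum_insert (hG.rootedParent_notMem_rootedChildren hv), add_sub_cancel_left]

end SimpleGraph

open SimpleGraph

theorem tree_eigenvalue_continued_fraction_general {V : Type*} [Fintype V] [DecidableEq V]
    (G : SimpleGraph V) [DecidableRel G.Adj] (x : V) (lam : ℝ) (w : V → ℝ)
    (htree : G.IsTree)
    (heig : (G.adjMatrix ℝ).mulVec w = lam • w)
    (hw : ∀ v : V, w v ≠ 0) :
    ∃ g : V → ℝ,
      (∀ v : V, v ≠ x →
        lam - ∑ y ∈ rootedChildren G x v, g y ≠ 0 ∧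
        g v = 1 / (lam - ∑ y ∈ rootedChildren G x v, g y)) ∧
      lam = ∑ y ∈ G.neighborFinset x, g y := by
  have hnbr : ∀ v, ∑ u ∈ G.neighborFinset v, w u = lam * w v := fun v => by
    simpa using congrFun heig v
  set g : V → ℝ := fun v => w v / w (G.rootedParent x v)
  have hsum : ∀ v, ∑ y ∈ rootedChildren G x v, g y = (∑ y ∈ rootedChildren G x v, w y) / w v := by
    intro v
    rw [sum_div]
    exact sum_congr rfl fun y hy => by
      simp only [g, htree.isAcyclic.rootedParent_of_mem_rootedChildren hy]
  refine ⟨g, fun v hv => ?_, ?_⟩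
  · have hden : lam - ∑ y ∈ rootedChildren G x v, g y = w (G.rootedParent x v) / w v := by
      rw [hsum, htree.sum_rootedChildren_eq_sub hv, hnbr]
      field_simp [hw v]
      ring
    rw [hden, one_div_div]
    exact ⟨div_ne_zero (hw _) (hw v), rfl⟩
  · rw [neighborFinset_eq_rootedChildren_self, hsum, ← neighborFinset_eq_rootedChildren_self,
      hnbr, mul_div_cancel_right₀ _ (hw x)]

/-- Continued-fraction identity for eigenvalues of a tree: if `λ > 0` is an eigenvalue of
the adjacency matrix of a finite tree rooted at `x`, with eigenvector `w` nonzero at every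
vertex, then there is a family `g` (the levels of the continued fraction, with
`g v = 1/(λ − Σ_{children y of v} g y)`, terminating with empty sums at leaves) whose
denominators are all nonzero and with `λ = Σ_{y ∼ x} g y`. -/
theorem tree_eigenvalue_continued_fraction {V : Type*} [Fintype V] [DecidableEq V]
    (G : SimpleGraph V) [DecidableRel G.Adj] (x : V) (lam : ℝ) (w : V → ℝ)
    (htree : G.IsTree) (hlam : 0 < lam)
    (heig : (G.adjMatrix ℝ).mulVec w = lam • w)
    (hw : ∀ v : V, w v ≠ 0) :
    ∃ g : V → ℝ,
      (∀ v : V, v ≠ x →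
        lam - ∑ y ∈ rootedChildren G x v, g y ≠ 0 ∧
        g v = 1 / (lam - ∑ y ∈ rootedChildren G x v, g y)) ∧
      lam = ∑ y ∈ G.neighborFinset x, g y :=
  tree_eigenvalue_continued_fraction_general G x lam w htree heig hw
end

section
/- Let T be a finite tree rooted at x with adjacency matrix A, let λ be its largest eigenvalue with positive (Perron) eigenvector w, and suppose every non-root vertex y has number of children N_y ≤ M with M < λ² (e.g. M ≤ λ²/2). Then for every edge (u,v) with v a child of u, w(u) ≥ (1 − C·M/λ²)·λ·w(v) and w(u) ≤ λ·w(v), for an absolute constant C. -/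
open Finset Matrix

namespace SimpleGraph

variable {V : Type*} {G : SimpleGraph V}

lemma IsAcyclic.eq_penultimate_of_adj_of_dist_lt (hG : G.IsAcyclic) {x v y : V}
    {p : G.Walk x v} (hp : p.IsPath) (hadj : G.Adj v y) (hy : G.dist x y < G.dist x v) :
    y = p.penultimate := by
  classical
  obtain ⟨q, hq, hq_len⟩ := (p.reachable.trans hadj.reachable).exists_path_of_dist
  have hv : v ∉ q.support := fun hv => by
    have := dist_le (q.takeUntil v hv)
    have := q.length_takeUntil_le_length hv
    omega
  exact hG.eq_penultimate_of_adj_end hp hadj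
    (hG.mem_support_of_ne_mem_support_of_adj_of_isPath hp hq hadj hv)

variable [Fintype V] [DecidableEq V] [DecidableRel G.Adj] {x u v : V}

lemma mem_rootedChildren :
    v ∈ rootedChildren G x u ↔ G.Adj u v ∧ G.dist x u < G.dist x v := by
  simp [rootedChildren]

lemma ne_of_mem_rootedChildren (h : v ∈ rootedChildren G x u) : v ≠ x := by
  rintro rfl
  simp [mem_rootedChildren] at h

lemma wellFounded_mem_rootedChildren : WellFounded fun c v => c ∈ rootedChildren G x v := by
  have : WellFounded fun c v : V => G.dist x v < G.dist x c :=
    @Finite.wellFounded_of_trans_of_irrefl _ _ _ ⟨fun _ _ _ h₁ h₂ => h₂.trans h₁⟩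
      ⟨fun _ => lt_irrefl _⟩
  exact Subrelation.wf (fun h => (mem_rootedChildren.1 h).2) this

lemma IsTree.neighborFinset_eq_insert_rootedChildren (hG : G.IsTree)
    (h : v ∈ rootedChildren G x u) : G.neighborFinset v = insert u (rootedChildren G x v) := by
  rw [mem_rootedChildren] at h
  obtain ⟨p, hp⟩ := (hG.connected x v).exists_isPath
  have eq_parent : ∀ y, G.Adj v y → G.dist x y < G.dist x v → y = u := fun y hy hlt => by
    rw [hG.isAcyclic.eq_penultimate_of_adj_of_dist_lt hp hy hlt,
      hG.isAcyclic.eq_penultimate_of_adj_of_dist_lt hp h.1.symm h.2]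
  ext y
  simp only [mem_insert, mem_neighborFinset, mem_rootedChildren]
  constructor
  · intro hy
    rcases hG.dist_eq_dist_add_one_of_adj x hy with hvy | hyv
    · exact .inl (eq_parent y hy (by omega))
    · exact .inr ⟨hy, by omega⟩
  · rintro (rfl | ⟨hy, -⟩)
    exacts [h.1.symm, hy]

lemma IsTree.adjMatrix_mulVec_apply_of_mem_rootedChildren {α : Type*} [NonAssocSemiring α]
    (hG : G.IsTree) (h : v ∈ rootedChildren G x u) (w : V → α) :
    (G.adjMatrix α *ᵥ w) v = w u + ∑ c ∈ rootedChildren G x v, w c := by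
  rw [adjMatrix_mulVec_apply, hG.neighborFinset_eq_insert_rootedChildren h, sum_insert]
  intro hu
  exact lt_asymm (mem_rootedChildren.1 h).2 (mem_rootedChildren.1 hu).2

variable {lam M : ℝ} {w : V → ℝ}

lemma mul_sum_rootedChildren_le (hw : 0 ≤ w v) (hcard : (#(rootedChildren G x v) : ℝ) ≤ M)
    (hchildren : ∀ c ∈ rootedChildren G x v, lam * w c ≤ 2 * w v) :
    lam * ∑ c ∈ rootedChildren G x v, w c ≤ 2 * M * w v :=
  calc lam * ∑ c ∈ rootedChildren G x v, w c
      = ∑ c ∈ rootedChildren G x v, lam * w c := mul_sum _ _ _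
    _ ≤ ∑ _c ∈ rootedChildren G x v, 2 * w v := sum_le_sum hchildren
    _ = #(rootedChildren G x v) * (2 * w v) := by rw [sum_const, nsmul_eq_mul]
    _ ≤ M * (2 * w v) := by gcongr
    _ = 2 * M * w v := by ring

lemma mul_le_two_mul_of_mem_rootedChildren (hlam : 0 < lam) (hw : ∀ v, 0 ≤ w v)
    (hM : ∀ v, v ≠ x → (#(rootedChildren G x v) : ℝ) ≤ M) (hM4 : M ≤ lam ^ 2 / 4)
    (hrec : ∀ u v, v ∈ rootedChildren G x u →
      lam * w v = w u + ∑ c ∈ rootedChildren G x v, w c)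
    (h : v ∈ rootedChildren G x u) : lam * w v ≤ 2 * w u := by
  induction v using (wellFounded_mem_rootedChildren (G := G) (x := x)).induction generalizing u with
  | h v ih =>
    have hsum := mul_sum_rootedChildren_le (hw v) (hM v (ne_of_mem_rootedChildren h))
      fun c hc => ih c hc hc
    have hrec_v := hrec u v h
    have : lam * (lam * w v) ≤ lam * (2 * w u) := by nlinarith [hw v]
    exact le_of_mul_le_mul_left this hlam

lemma mul_sub_two_mul_div_le_of_mem_rootedChildren (hlam : 0 < lam) (hw : ∀ v, 0 ≤ w v)
    (hM : ∀ v, v ≠ x → (#(rootedChildren G x v) : ℝ) ≤ M) (hM4 : M ≤ lam ^ 2 / 4)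
    (hrec : ∀ u v, v ∈ rootedChildren G x u →
      lam * w v = w u + ∑ c ∈ rootedChildren G x v, w c)
    (h : v ∈ rootedChildren G x u) : lam * w v - 2 * M * w v / lam ≤ w u := by
  have hsum := mul_sum_rootedChildren_le (hw v) (hM v (ne_of_mem_rootedChildren h))
    fun c hc => mul_le_two_mul_of_mem_rootedChildren hlam hw hM hM4 hrec hc
  have : ∑ c ∈ rootedChildren G x v, w c ≤ 2 * M * w v / lam := by
    rwa [le_div_iff₀ hlam, mul_comm]
  linarith [hrec u v h]

end SimpleGraph

open SimpleGraph

/-- Perron eigenvector decay along edges of a tree: if `λ > 0` is the largest eigenvalue of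
a finite tree rooted at `x`, with strictly positive eigenvector `w`, and every non-root
vertex has at most `M ≤ λ²/2` children, then for every edge with `v` a child of `u`,
`(1 − C·M/λ²)·λ·w(v) ≤ w(u) ≤ λ·w(v)` for an absolute constant `C`. -/
theorem tree_perron_eigenvector_ratio :
    ∃ C : ℝ, 0 < C ∧
      ∀ (V : Type) [Fintype V] [DecidableEq V] (G : SimpleGraph V) [DecidableRel G.Adj]
        (x : V) (lam : ℝ) (w : V → ℝ) (M : ℝ),
        G.IsTree → 0 < lam →
        IsGreatest (spectrum ℝ (G.adjMatrix ℝ)) lam →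
        (G.adjMatrix ℝ).mulVec w = lam • w →
        (∀ v : V, 0 < w v) →
        (∀ v : V, v ≠ x → ((rootedChildren G x v).card : ℝ) ≤ M) →
        0 ≤ M → M ≤ lam ^ 2 / 2 →
        ∀ u v : V, v ∈ rootedChildren G x u →
          (1 - C * M / lam ^ 2) * lam * w v ≤ w u ∧ w u ≤ lam * w v := by
  refine ⟨4, by norm_num, ?_⟩
  intro V _ _ G _ x lam w M hT hlam _ heig hw hM hM0 _ u v h
  have hrec : ∀ u v, v ∈ rootedChildren G x u →
      lam * w v = w u + ∑ c ∈ rootedChildren G x v, w c := fun u v h => by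
    rw [← hT.adjMatrix_mulVec_apply_of_mem_rootedChildren h, heig, Pi.smul_apply, smul_eq_mul]
  have hcoeff : (1 - 4 * M / lam ^ 2) * lam * w v = lam * w v - 4 * M * w v / lam := by
    field_simp
  have hsum_nonneg : 0 ≤ ∑ c ∈ rootedChildren G x v, w c := sum_nonneg fun c _ => (hw c).le
  refine ⟨?_, by linarith [hrec u v h]⟩
  rw [hcoeff]
  rcases le_or_gt M (lam ^ 2 / 4) with hM4 | hM4
  · have := mul_sub_two_mul_div_le_of_mem_rootedChildren hlam (fun v => (hw v).le) hM hM4 hrec h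
    have : 2 * M * w v / lam ≤ 4 * M * w v / lam :=
      div_le_div_of_nonneg_right (by nlinarith [hw v]) hlam.le
    linarith
  · have : lam * w v < 4 * M * w v / lam := by
      rw [lt_div_iff₀ hlam]; nlinarith [hw v]
    linarith [hw u]
end

section
/- Suppose real numbers λ, α, β, β⁽¹¹⁾, β⁽²⁾ satisfy λ² = α + λ⁻²β + λ⁻⁴(β⁽²⁾ + β⁽¹¹⁾) + E with |E| ≤ ε, together with the a priori bounds α ≤ λ² ≤ α + Cd, β ≤ 2dα, β⁽¹¹⁾ + β⁽²⁾ ≤ C'(d²+d)α, where 1 ≤ d ≤ α^{1/3} and α is sufficiently large. Then λ² = α + β/α + (β⁽¹¹⁾ + β⁽²⁾)/α² − β²/α³ + O(ε + (d²+d)²/α²). -/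
/-!
Write `L = λ²`, `B = β⁽¹¹⁾ + β⁽²⁾` and `E = L - (α + β/L + B/L²)`. Substituting the fixed-point
equation into itself (`β/L = β/α - β(L - α)/(αL)` with `L - α = β/L + B/L² + E`) gives an exact
identity: `L` minus the claimed expansion is `E(1 - β/(αL))` plus three remainder terms with
numerators `βB`, `B(L² - α²)` and `β²(L² - α²)`. Since `d ≤ α^{1/3} ≤ α`, the a priori bounds give
`β/(αL) ∈ [0, 2]`, so the first term is at most `ε`; and `L² - α² ≤ 2CdL` together with
`β ≤ 2dα`, `B ≤ C'(d² + d)α` makes each remainder `O((d² + d)²/α²)`.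
-/

section BootstrapRemainders

variable {L α β B C C' d : ℝ}

theorem sub_expansion_eq (hα : α ≠ 0) (hL : L ≠ 0) :
    L - (α + β / α + B / α ^ 2 - β ^ 2 / α ^ 3) =
      (L - (α + β / L + B / L ^ 2)) * (1 - β / (α * L)) - β * B / (α * L ^ 3)
        - B * (L ^ 2 - α ^ 2) / (α ^ 2 * L ^ 2) + β ^ 2 * (L ^ 2 - α ^ 2) / (α ^ 3 * L ^ 2) := by
  field_simp
  ring

theorem abs_mul_one_sub_le {E q ε : ℝ} (hE : |E| ≤ ε) (hq₀ : 0 ≤ q) (hq₂ : q ≤ 2) :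
    |E * (1 - q)| ≤ ε := by
  have hq : |1 - q| ≤ 1 := abs_le.2 ⟨by linarith, by linarith⟩
  calc |E * (1 - q)| = |E| * |1 - q| := abs_mul _ _
    _ ≤ ε * 1 := mul_le_mul hE hq (abs_nonneg _) ((abs_nonneg _).trans hE)
    _ = ε := mul_one ε

theorem div_mul_le_two (hα : 0 < α) (hαL : α ≤ L) (hdα : d ≤ α) (hβ : β ≤ 2 * d * α) :
    β / (α * L) ≤ 2 := by
  have hL : 0 < L := hα.trans_le hαL
  rw [div_le_iff₀ (by positivity)]
  nlinarith

theorem sq_sub_sq_le (hα : 0 < α) (hαL : α ≤ L) (hLα : L ≤ α + C * d) :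
    L ^ 2 - α ^ 2 ≤ 2 * C * d * L := by
  nlinarith

theorem mul_div_cube_le (hα : 0 < α) (hαL : α ≤ L) (hd : 0 ≤ d) (hC' : 0 ≤ C')
    (hβ : β ≤ 2 * d * α) (hB₀ : 0 ≤ B) (hB : B ≤ C' * (d ^ 2 + d) * α) :
    β * B / (α * L ^ 3) ≤ 2 * C' * ((d ^ 2 + d) ^ 2 / α ^ 2) := by
  have hL : 0 < L := hα.trans_le hαL
  rw [mul_div_assoc', div_le_div_iff₀ (by positivity) (by positivity)]
  calc β * B * α ^ 2 ≤ (2 * d * α) * (C' * (d ^ 2 + d) * α) * α ^ 2 := by gcongr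
    _ = 2 * C' * (d * (d ^ 2 + d)) * (α * α ^ 3) := by ring
    _ ≤ 2 * C' * (d ^ 2 + d) ^ 2 * (α * L ^ 3) := by gcongr; nlinarith

theorem mul_sq_sub_sq_div_le (hα : 0 < α) (hαL : α ≤ L) (hd : 0 ≤ d) (hC : 0 ≤ C)
    (hLα : L ≤ α + C * d) (hB₀ : 0 ≤ B) (hB : B ≤ C' * (d ^ 2 + d) * α) :
    B * (L ^ 2 - α ^ 2) / (α ^ 2 * L ^ 2) ≤ 2 * C * C' * ((d ^ 2 + d) ^ 2 / α ^ 2) := by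
  have hC' : 0 ≤ C' * (d ^ 2 + d) := nonneg_of_mul_nonneg_left (hB₀.trans hB) hα
  have hL : 0 < L := hα.trans_le hαL
  rw [mul_div_assoc', div_le_div_iff₀ (by positivity) (by positivity)]
  calc B * (L ^ 2 - α ^ 2) * α ^ 2
      ≤ (C' * (d ^ 2 + d) * α) * (2 * C * d * L) * α ^ 2 := by
        gcongr
        · nlinarith
        · exact sq_sub_sq_le hα hαL hLα
    _ = 2 * C * (C' * (d ^ 2 + d)) * d * (α * α ^ 2 * L) := by ring
    _ ≤ 2 * C * (C' * (d ^ 2 + d)) * (d ^ 2 + d) * (L * α ^ 2 * L) := by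
        gcongr; nlinarith
    _ = 2 * C * C' * (d ^ 2 + d) ^ 2 * (α ^ 2 * L ^ 2) := by ring

theorem sq_mul_sq_sub_sq_div_le (hα : 0 < α) (hαL : α ≤ L) (hC : 0 ≤ C)
    (hLα : L ≤ α + C * d) (hβ₀ : 0 ≤ β) (hβ : β ≤ 2 * d * α) :
    β ^ 2 * (L ^ 2 - α ^ 2) / (α ^ 3 * L ^ 2) ≤ 8 * C * ((d ^ 2 + d) ^ 2 / α ^ 2) := by
  have hL : 0 < L := hα.trans_le hαL
  rw [mul_div_assoc', div_le_div_iff₀ (by positivity) (by positivity)]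
  calc β ^ 2 * (L ^ 2 - α ^ 2) * α ^ 2
      ≤ (2 * d * α) ^ 2 * (2 * C * d * L) * α ^ 2 := by
        gcongr
        · nlinarith
        · exact sq_sub_sq_le hα hαL hLα
    _ = 8 * C * d ^ 3 * (α * (α ^ 3 * L)) := by ring
    _ ≤ 8 * C * (d ^ 2 + d) ^ 2 * (L * (α ^ 3 * L)) := by gcongr; nlinarith
    _ = 8 * C * (d ^ 2 + d) ^ 2 * (α ^ 3 * L ^ 2) := by ring

theorem abs_sub_expansion_le {ε : ℝ} (hα : 0 < α) (hαL : α ≤ L) (hLα : L ≤ α + C * d)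
    (hd : 0 ≤ d) (hdα : d ≤ α) (hC : 0 ≤ C) (hC' : 0 ≤ C')
    (hβ₀ : 0 ≤ β) (hβ : β ≤ 2 * d * α) (hB₀ : 0 ≤ B) (hB : B ≤ C' * (d ^ 2 + d) * α)
    (hE : |L - (α + β / L + B / L ^ 2)| ≤ ε) :
    |L - (α + β / α + B / α ^ 2 - β ^ 2 / α ^ 3)| ≤
      ε + (2 * C' + 2 * C * C' + 8 * C) * ((d ^ 2 + d) ^ 2 / α ^ 2) := by
  have hL : 0 < L := hα.trans_le hαL
  have hmain := abs_mul_one_sub_le hE (by positivity) (div_mul_le_two hα hαL hdα hβ)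
  have h₁ := mul_div_cube_le hα hαL hd hC' hβ hB₀ hB
  have h₂ := mul_sq_sub_sq_div_le hα hαL hd hC hLα hB₀ hB
  have h₃ := sq_mul_sq_sub_sq_div_le hα hαL hC hLα hβ₀ hβ
  have hsq : 0 ≤ L ^ 2 - α ^ 2 := by nlinarith
  have h₁₀ : 0 ≤ β * B / (α * L ^ 3) := by positivity
  have h₂₀ : 0 ≤ B * (L ^ 2 - α ^ 2) / (α ^ 2 * L ^ 2) := by positivity
  have h₃₀ : 0 ≤ β ^ 2 * (L ^ 2 - α ^ 2) / (α ^ 3 * L ^ 2) := by positivity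
  rw [sub_expansion_eq hα.ne' hL.ne', abs_le]
  constructor <;> nlinarith [abs_le.1 hmain]

end BootstrapRemainders

theorem eigenvalue_bootstrap_general (C C' : ℝ) :
    ∃ C₀ A₀ : ℝ, 0 < C₀ ∧
      ∀ lam α β b11 b2 d ε : ℝ,
        A₀ ≤ α → 1 ≤ d → d ≤ α ^ ((1 : ℝ) / 3) →
        0 ≤ β → 0 ≤ b11 → 0 ≤ b2 → 0 ≤ ε →
        α ≤ lam ^ 2 → lam ^ 2 ≤ α + C * d →
        β ≤ 2 * d * α → b11 + b2 ≤ C' * (d ^ 2 + d) * α →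
        |lam ^ 2 - (α + β / lam ^ 2 + (b2 + b11) / lam ^ 4)| ≤ ε →
        |lam ^ 2 - (α + β / α + (b11 + b2) / α ^ 2 - β ^ 2 / α ^ 3)| ≤
          C₀ * (ε + (d ^ 2 + d) ^ 2 / α ^ 2) := by
  set K := 2 * |C'| + 2 * |C| * |C'| + 8 * |C|
  refine ⟨1 + K, 1, by positivity, ?_⟩
  intro lam α β b11 b2 d ε hα hd hdα hβ₀ hb11 hb2 hε hαL hLα hβ hB hE
  have hα₀ : 0 < α := by linarith
  have hdα' : d ≤ α := hdα.trans (Real.rpow_le_self_of_one_le hα (by norm_num))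
  rw [add_comm b2 b11, show lam ^ 4 = (lam ^ 2) ^ 2 by ring] at hE
  have hLα' : lam ^ 2 ≤ α + |C| * d := hLα.trans (by gcongr; exact le_abs_self C)
  have hB' : b11 + b2 ≤ |C'| * (d ^ 2 + d) * α := hB.trans (by gcongr; exact le_abs_self C')
  have key := abs_sub_expansion_le hα₀ hαL hLα' (by linarith) hdα' (abs_nonneg C)
    (abs_nonneg C') hβ₀ hβ (by positivity) hB' hE
  have hK : 0 ≤ K := by positivity
  have hP : 0 ≤ (d ^ 2 + d) ^ 2 / α ^ 2 := by positivity
  calc _ ≤ ε + K * ((d ^ 2 + d) ^ 2 / α ^ 2) := key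
    _ ≤ (1 + K) * (ε + (d ^ 2 + d) ^ 2 / α ^ 2) := by nlinarith

/-- Bootstrapping the eigenvalue equation: if
`λ² = α + λ⁻²β + λ⁻⁴(β⁽²⁾+β⁽¹¹⁾) + E` with `|E| ≤ ε`, together with the a priori bounds
`α ≤ λ² ≤ α + Cd`, `β ≤ 2dα`, `β⁽¹¹⁾+β⁽²⁾ ≤ C'(d²+d)α`, `1 ≤ d ≤ α^{1/3}`, and `α`
sufficiently large, then `λ² = α + β/α + (β⁽¹¹⁾+β⁽²⁾)/α² − β²/α³ + O(ε + (d²+d)²/α²)`. -/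
theorem eigenvalue_bootstrap (C C' : ℝ) (hC : 0 < C) (hC' : 0 < C') :
    ∃ C₀ A₀ : ℝ, 0 < C₀ ∧
      ∀ lam α β b11 b2 d ε : ℝ,
        A₀ ≤ α → 1 ≤ d → d ≤ α ^ ((1 : ℝ) / 3) →
        0 ≤ β → 0 ≤ b11 → 0 ≤ b2 → 0 ≤ ε →
        α ≤ lam ^ 2 → lam ^ 2 ≤ α + C * d →
        β ≤ 2 * d * α → b11 + b2 ≤ C' * (d ^ 2 + d) * α →
        |lam ^ 2 - (α + β / lam ^ 2 + (b2 + b11) / lam ^ 4)| ≤ ε →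
        |lam ^ 2 - (α + β / α + (b11 + b2) / α ^ 2 - β ^ 2 / α ^ 3)| ≤
          C₀ * (ε + (d ^ 2 + d) ^ 2 / α ^ 2) :=
  eigenvalue_bootstrap_general C C'
end

section
/- Let B be a symmetric block matrix B = [[D, E*],[E, X]] where D is diagonal, and let B₀ = [[D, 0],[0, X]]. Then |λ_k(B) − λ_k(B₀)| ≤ ‖B − B₀‖ = ‖E‖ for all k (eigenvalues in sorted order), and moreover if the spectra of D and X are separated by a gap δ > 2‖E‖, the eigenvalues of B within distance ‖E‖ of spec(D) differ from those of D by at most ‖E‖²/(δ − 2‖E‖). -/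
open Matrix

/-- The eigenvalues of a Hermitian matrix, sorted in increasing order. -/
noncomputable def sortedEigenvalues {n : Type*} [Fintype n] [DecidableEq n]
    {A : Matrix n n ℝ} (hA : A.IsHermitian) : Fin (Fintype.card n) → ℝ :=
  hA.eigenvalues₀ ∘ Tuple.sort hA.eigenvalues₀

/-- Operator (ℓ²→ℓ²) norm of a rectangular real matrix. -/
noncomputable def matrixOpNorm {m k : ℕ} (E : Matrix (Fin k) (Fin m) ℝ) : ℝ :=
  ‖LinearMap.toContinuousLinearMap (Matrix.toEuclideanLin E)‖


open Finset Module
set_option linter.unusedSectionVars false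
set_option linter.unreachableTactic false
set_option linter.unusedTactic false


section Aux

variable {ι : Type*} [Fintype ι] [DecidableEq ι]
variable {F : Type*} [NormedAddCommGroup F] [InnerProductSpace ℝ F]

lemma euc_norm_sq (y : EuclideanSpace ℝ ι) : ‖y‖ ^ 2 = ∑ i, (y i) ^ 2 := by
  have h : ‖y‖ = Real.sqrt (∑ i, (y i) ^ 2) := by
    rw [EuclideanSpace.norm_eq]
    congr 1
    refine Finset.sum_congr rfl fun i _ => ?_
    rw [Real.norm_eq_abs, sq_abs]
  rw [h, Real.sq_sqrt (by positivity)]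

lemma onb_norm_sq_repr (b : OrthonormalBasis ι ℝ F) (y : F) :
    ‖y‖ ^ 2 = ∑ i, (b.repr y i) ^ 2 := by
  rw [← b.repr.norm_map y, euc_norm_sq]

lemma onb_repr_diag (b : OrthonormalBasis ι ℝ F) (T : F →ₗ[ℝ] F) (f : ι → ℝ)
    (hT : ∀ i, T (b i) = f i • b i) (x : F) (i : ι) :
    b.repr (T x) i = f i * b.repr x i := by
  rw [b.repr_apply_apply]
  conv_lhs => rw [← b.sum_repr x]
  rw [map_sum, inner_sum]
  have : ∀ j, (inner ℝ (b i) (T (b.repr x j • b j)) : ℝ)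
      = (f j * b.repr x j) * (if i = j then 1 else 0) := by
    intro j
    rw [_root_.map_smul, hT, real_inner_smul_right, real_inner_smul_right,
      orthonormal_iff_ite.mp b.orthonormal]
    ring
  simp only [this, mul_ite, mul_one, mul_zero, Finset.sum_ite_eq, Finset.mem_univ, if_true]

lemma onb_inner_diag (b : OrthonormalBasis ι ℝ F) (T : F →ₗ[ℝ] F) (f : ι → ℝ)
    (hT : ∀ i, T (b i) = f i • b i) (x : F) :
    (inner ℝ (T x) x : ℝ) = ∑ i, f i * (b.repr x i) ^ 2 := by
  rw [← b.repr.inner_map_map (T x) x, PiLp.inner_apply]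
  refine Finset.sum_congr rfl fun i _ => ?_
  rw [onb_repr_diag b T f hT]
  simp [RCLike.inner_apply, starRingEnd_apply]
  ring

lemma onb_repr_zero_of_span (b : OrthonormalBasis ι ℝ F) (s : Finset ι) {x : F}
    (hx : x ∈ Submodule.span ℝ (b '' ↑s)) {i : ι} (hi : i ∉ s) : b.repr x i = 0 := by
  induction hx using Submodule.span_induction with
  | mem y hy =>
    obtain ⟨j, hj, rfl⟩ := hy
    rw [b.repr_self]
    rw [EuclideanSpace.single_apply]
    simp only [ite_eq_right_iff]
    intro h; exact absurd (h ▸ hj) hi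
  | zero => simp
  | add y z _ _ hy hz => rw [map_add]; simp [PiLp.add_apply, hy, hz]
  | smul c y _ hy => rw [_root_.map_smul]; simp [PiLp.smul_apply, hy]

lemma onb_finrank_span (b : OrthonormalBasis ι ℝ F) (s : Finset ι) :
    finrank ℝ (Submodule.span ℝ (b '' ↑s)) = s.card := by
  have li : LinearIndependent ℝ (fun j : ↥(↑s : Set ι) => b j) :=
    b.orthonormal.linearIndependent.comp _ Subtype.val_injective
  rw [show b '' ↑s = Set.range (fun j : ↥(↑s : Set ι) => b j) from (Set.image_eq_range _ _),
    finrank_span_eq_card li]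
  simp

lemma exists_ne_zero_mem_inf [FiniteDimensional ℝ F] (U V : Submodule ℝ F)
    (h : finrank ℝ F < finrank ℝ U + finrank ℝ V) : ∃ x : F, x ≠ 0 ∧ x ∈ U ⊓ V := by
  have h1 := Submodule.finrank_sup_add_finrank_inf_eq U V
  have h2 : finrank ℝ ↥(U ⊔ V) ≤ finrank ℝ F := Submodule.finrank_le _
  have hpos : 0 < finrank ℝ ↥(U ⊓ V) := by omega
  obtain ⟨x, hx⟩ := Module.finrank_pos_iff_exists_ne_zero.mp hpos
  exact ⟨x.1, by simpa [Submodule.coe_eq_zero] using hx, x.2⟩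

end Aux


-- placeholders from part a

section Sorted
variable {ι : Type*} [Fintype ι] [DecidableEq ι] {A : Matrix ι ι ℝ}

/-- Orthonormal basis of eigenvectors matching the sorted eigenvalues. -/
noncomputable def sortedOEB (hA : A.IsHermitian) :
    OrthonormalBasis (Fin (Fintype.card ι)) ℝ (EuclideanSpace ℝ ι) :=
  hA.eigenvectorBasis.reindex
    (((Tuple.sort hA.eigenvalues₀).trans (Fintype.equivOfCardEq (Fintype.card_fin _))).symm)

lemma sortedOEB_diag (hA : A.IsHermitian) (j : Fin (Fintype.card ι)) :
    Matrix.toEuclideanLin A (sortedOEB hA j) = sortedEigenvalues hA j • sortedOEB hA j := by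
  have h1 : sortedOEB hA j
      = hA.eigenvectorBasis ((Fintype.equivOfCardEq (Fintype.card_fin _))
          (Tuple.sort hA.eigenvalues₀ j)) := by
    simp [sortedOEB, OrthonormalBasis.reindex_apply]
  have h2 := hA.mulVec_eigenvectorBasis ((Fintype.equivOfCardEq (Fintype.card_fin _))
      (Tuple.sort hA.eigenvalues₀ j))
  rw [h1]
  apply (WithLp.equiv 2 _).injective
  simp only [WithLp.equiv_apply]
  rw [Matrix.ofLp_toEuclideanLin_apply]
  have h3 : hA.eigenvalues ((Fintype.equivOfCardEq (Fintype.card_fin _))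
      (Tuple.sort hA.eigenvalues₀ j)) = sortedEigenvalues hA j := by
    simp [Matrix.IsHermitian.eigenvalues, sortedEigenvalues]
  funext i
  have := congrFun h2 i
  simpa [h3] using this

lemma sortedEigenvalues_monotone (hA : A.IsHermitian) : Monotone (sortedEigenvalues hA) :=
  Tuple.monotone_sort hA.eigenvalues₀

lemma weyl_one_sided {A A' : Matrix ι ι ℝ} (hA : A.IsHermitian) (hA' : A'.IsHermitian)
    (j : Fin (Fintype.card ι)) :
    sortedEigenvalues hA j ≤ sortedEigenvalues hA' j
      + ‖Matrix.toEuclideanCLM (𝕜 := ℝ) (A - A')‖ := by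
  set b := sortedOEB hA
  set b' := sortedOEB hA'
  set W : Submodule ℝ (EuclideanSpace ℝ ι) := Submodule.span ℝ (b '' ↑(Finset.Ici j))
  set W' : Submodule ℝ (EuclideanSpace ℝ ι) := Submodule.span ℝ (b' '' ↑(Finset.Iic j))
  have hcard : (Finset.Ici j).card + (Finset.Iic j).card = Fintype.card ι + 1 := by
    have hu : Finset.Ici j ∪ Finset.Iic j = Finset.univ := by
      ext p; simp [le_total j p]
    have hi : Finset.Ici j ∩ Finset.Iic j = {j} := by
      ext p; simp only [Finset.mem_inter, Finset.mem_Ici, Finset.mem_Iic, Finset.mem_singleton]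
      constructor
      · rintro ⟨h1, h2⟩; exact le_antisymm h2 h1
      · rintro rfl; exact ⟨le_rfl, le_rfl⟩
    have h2 := Finset.card_union_add_card_inter (Finset.Ici j) (Finset.Iic j)
    rw [hu, hi] at h2
    have h3 := j.isLt
    simp only [Finset.card_univ, Finset.card_singleton, Fintype.card_fin] at h2
    omega
  have hdim : finrank ℝ (EuclideanSpace ℝ ι) < finrank ℝ W + finrank ℝ W' := by
    rw [onb_finrank_span, onb_finrank_span, finrank_euclideanSpace]
    omega
  obtain ⟨x, hx0, hxmem⟩ := exists_ne_zero_mem_inf W W' hdim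
  obtain ⟨hxW, hxW'⟩ := hxmem
  have hxnorm : (0:ℝ) < ‖x‖ ^ 2 := pow_pos (norm_pos_iff.mpr hx0) 2
  have hq1 : sortedEigenvalues hA j * ‖x‖ ^ 2 ≤ inner ℝ (Matrix.toEuclideanLin A x) x := by
    rw [onb_inner_diag b (Matrix.toEuclideanLin A) (sortedEigenvalues hA) (sortedOEB_diag hA) x,
      onb_norm_sq_repr b x, Finset.mul_sum]
    refine Finset.sum_le_sum fun p _ => ?_
    by_cases hp : b.repr x p = 0
    · simp [hp]
    · have hpmem : p ∈ Finset.Ici j := by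
        by_contra hpm
        exact hp (onb_repr_zero_of_span b _ hxW hpm)
      have : sortedEigenvalues hA j ≤ sortedEigenvalues hA p :=
        sortedEigenvalues_monotone hA (Finset.mem_Ici.mp hpmem)
      exact mul_le_mul_of_nonneg_right this (sq_nonneg _)
  have hq2 : (inner ℝ (Matrix.toEuclideanLin A' x) x : ℝ) ≤ sortedEigenvalues hA' j * ‖x‖ ^ 2 := by
    rw [onb_inner_diag b' (Matrix.toEuclideanLin A') (sortedEigenvalues hA') (sortedOEB_diag hA') x,
      onb_norm_sq_repr b' x, Finset.mul_sum]
    refine Finset.sum_le_sum fun p _ => ?_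
    by_cases hp : b'.repr x p = 0
    · simp [hp]
    · have hpmem : p ∈ Finset.Iic j := by
        by_contra hpm
        exact hp (onb_repr_zero_of_span b' _ hxW' hpm)
      have : sortedEigenvalues hA' p ≤ sortedEigenvalues hA' j :=
        sortedEigenvalues_monotone hA' (Finset.mem_Iic.mp hpmem)
      exact mul_le_mul_of_nonneg_right this (sq_nonneg _)
  have hq3 : (inner ℝ (Matrix.toEuclideanLin (A - A') x) x : ℝ)
      ≤ ‖Matrix.toEuclideanCLM (𝕜 := ℝ) (A - A')‖ * ‖x‖ ^ 2 := by
    have hco : Matrix.toEuclideanLin (A - A') x = Matrix.toEuclideanCLM (𝕜 := ℝ) (A - A') x := by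
      rw [← Matrix.coe_toEuclideanCLM_eq_toEuclideanLin]; rfl
    calc (inner ℝ (Matrix.toEuclideanLin (A - A') x) x : ℝ)
        ≤ ‖Matrix.toEuclideanLin (A - A') x‖ * ‖x‖ := real_inner_le_norm _ _
      _ ≤ (‖Matrix.toEuclideanCLM (𝕜 := ℝ) (A - A')‖ * ‖x‖) * ‖x‖ := by
          rw [hco]
          exact mul_le_mul_of_nonneg_right
            ((Matrix.toEuclideanCLM (𝕜 := ℝ) (A - A')).le_opNorm x) (norm_nonneg x)
      _ = ‖Matrix.toEuclideanCLM (𝕜 := ℝ) (A - A')‖ * ‖x‖ ^ 2 := by ring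
  have hsplit : (inner ℝ (Matrix.toEuclideanLin A x) x : ℝ)
      = inner ℝ (Matrix.toEuclideanLin A' x) x + inner ℝ (Matrix.toEuclideanLin (A - A') x) x := by
    rw [map_sub]
    simp [LinearMap.sub_apply, inner_sub_left]
  have hfinal : sortedEigenvalues hA j * ‖x‖ ^ 2
      ≤ (sortedEigenvalues hA' j + ‖Matrix.toEuclideanCLM (𝕜 := ℝ) (A - A')‖) * ‖x‖ ^ 2 := by
    rw [add_mul]
    calc sortedEigenvalues hA j * ‖x‖ ^ 2 ≤ _ := hq1
      _ ≤ _ := by rw [hsplit]; exact add_le_add hq2 hq3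
  exact (mul_le_mul_iff_left₀ hxnorm).mp hfinal

end Sorted


lemma matrixOpNorm_nonneg {m k : ℕ} (E : Matrix (Fin k) (Fin m) ℝ) : 0 ≤ matrixOpNorm E :=
  norm_nonneg _

open scoped Matrix.Norms.L2Operator in
lemma matrixOpNorm_transpose {m k : ℕ} (E : Matrix (Fin k) (Fin m) ℝ) :
    matrixOpNorm Eᵀ = matrixOpNorm E := by
  have h1 : matrixOpNorm Eᵀ = ‖Eᵀ‖ := rfl
  have h2 : matrixOpNorm E = ‖E‖ := rfl
  rw [h1, h2, ← Matrix.l2_opNorm_conjTranspose E, Matrix.conjTranspose_eq_transpose_of_trivial]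

lemma matrix_mulVec_norm_le {a b : ℕ} (M : Matrix (Fin a) (Fin b) ℝ) (y : Fin b → ℝ) :
    ‖(WithLp.equiv 2 (Fin a → ℝ)).symm (M *ᵥ y)‖
      ≤ matrixOpNorm M * ‖(WithLp.equiv 2 (Fin b → ℝ)).symm y‖ := by
  have h := (LinearMap.toContinuousLinearMap (Matrix.toEuclideanLin M)).le_opNorm
    ((WithLp.equiv 2 (Fin b → ℝ)).symm y)
  rw [LinearMap.coe_toContinuousLinearMap'] at h
  exact h

lemma toEuclideanCLM_coord {n : Type*} [Fintype n] [DecidableEq n]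
    (M : Matrix n n ℝ) (x : EuclideanSpace ℝ n) (s : n) :
    Matrix.toEuclideanCLM (𝕜 := ℝ) M x s = (M *ᵥ (fun t => x t)) s := by
  have h := Matrix.ofLp_toEuclideanCLM (𝕜 := ℝ) (n := n) M x
  have h2 := congrFun h s
  exact h2

lemma block_opNorm {m k : ℕ} (E : Matrix (Fin k) (Fin m) ℝ) :
    ‖Matrix.toEuclideanCLM (𝕜 := ℝ) (Matrix.fromBlocks (0 : Matrix (Fin m) (Fin m) ℝ) Eᵀ E
      (0 : Matrix (Fin k) (Fin k) ℝ))‖ = matrixOpNorm E := by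
  set M := Matrix.fromBlocks (0 : Matrix (Fin m) (Fin m) ℝ) Eᵀ E (0 : Matrix (Fin k) (Fin k) ℝ)
    with hM
  set T := Matrix.toEuclideanCLM (𝕜 := ℝ) M with hT
  have hcoord : ∀ (x : EuclideanSpace ℝ (Fin m ⊕ Fin k)) (s : Fin m ⊕ Fin k),
      T x s = Sum.elim (Eᵀ *ᵥ (fun j => x (Sum.inr j))) (E *ᵥ (fun i => x (Sum.inl i))) s := by
    intro x s
    rw [hT, toEuclideanCLM_coord, hM, Matrix.fromBlocks_mulVec]
    cases s with
    | inl i => simp [Matrix.zero_mulVec]; rfl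
    | inr j => simp [Matrix.zero_mulVec]; rfl
  apply le_antisymm
  · refine ContinuousLinearMap.opNorm_le_bound _ (matrixOpNorm_nonneg E) fun x => ?_
    have hsq : ‖T x‖ ^ 2 ≤ (matrixOpNorm E * ‖x‖) ^ 2 := by
      have h1 : ‖T x‖ ^ 2
          = ‖(WithLp.equiv 2 (Fin m → ℝ)).symm (Eᵀ *ᵥ (fun j => x (Sum.inr j)))‖ ^ 2
          + ‖(WithLp.equiv 2 (Fin k → ℝ)).symm (E *ᵥ (fun i => x (Sum.inl i)))‖ ^ 2 := by
        rw [euc_norm_sq, euc_norm_sq, euc_norm_sq, Fintype.sum_sum_type]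
        congr 1
        · exact Finset.sum_congr rfl fun i _ => by
            rw [hcoord x (Sum.inl i)]; simp [WithLp.equiv_symm_apply, PiLp.toLp_apply]
        · exact Finset.sum_congr rfl fun j _ => by
            rw [hcoord x (Sum.inr j)]; simp [WithLp.equiv_symm_apply, PiLp.toLp_apply]
      have hx : ‖x‖ ^ 2
          = ‖(WithLp.equiv 2 (Fin m → ℝ)).symm (fun i => x (Sum.inl i))‖ ^ 2
          + ‖(WithLp.equiv 2 (Fin k → ℝ)).symm (fun j => x (Sum.inr j))‖ ^ 2 := by
        rw [euc_norm_sq, euc_norm_sq, euc_norm_sq, Fintype.sum_sum_type]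
        congr 1 <;> exact Finset.sum_congr rfl fun i _ => by simp [WithLp.equiv_symm_apply, PiLp.toLp_apply]
      rw [h1]
      have b1 := matrix_mulVec_norm_le Eᵀ (fun j => x (Sum.inr j))
      have b2 := matrix_mulVec_norm_le E (fun i => x (Sum.inl i))
      rw [matrixOpNorm_transpose] at b1
      have s1 : ‖(WithLp.equiv 2 (Fin m → ℝ)).symm (Eᵀ *ᵥ (fun j => x (Sum.inr j)))‖ ^ 2
          ≤ (matrixOpNorm E * ‖(WithLp.equiv 2 (Fin k → ℝ)).symm (fun j => x (Sum.inr j))‖) ^ 2 :=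
        pow_le_pow_left₀ (norm_nonneg _) b1 2
      have s2 : ‖(WithLp.equiv 2 (Fin k → ℝ)).symm (E *ᵥ (fun i => x (Sum.inl i)))‖ ^ 2
          ≤ (matrixOpNorm E * ‖(WithLp.equiv 2 (Fin m → ℝ)).symm (fun i => x (Sum.inl i))‖) ^ 2 :=
        pow_le_pow_left₀ (norm_nonneg _) b2 2
      calc _ ≤ _ := add_le_add s1 s2
        _ = (matrixOpNorm E * ‖x‖) ^ 2 := by
            rw [mul_pow, mul_pow, mul_pow, hx]; ring
    have := Real.sqrt_le_sqrt hsq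
    rw [Real.sqrt_sq (norm_nonneg _), Real.sqrt_sq (mul_nonneg (matrixOpNorm_nonneg E) (norm_nonneg _))] at this
    exact this
  · have h2 : matrixOpNorm E = ‖LinearMap.toContinuousLinearMap (Matrix.toEuclideanLin E)‖ := rfl
    rw [h2]
    refine ContinuousLinearMap.opNorm_le_bound _ (norm_nonneg _) fun y => ?_
    set x : EuclideanSpace ℝ (Fin m ⊕ Fin k) :=
      (WithLp.equiv 2 ((Fin m ⊕ Fin k) → ℝ)).symm (Sum.elim (fun i => y i) (fun _ => 0)) with hx
    have hxco : ∀ s, x s = Sum.elim (fun i => y i) (fun _ => (0:ℝ)) s := by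
      intro s; rfl
    have hxnorm : ‖x‖ = ‖y‖ := by
      have : ‖x‖ ^ 2 = ‖y‖ ^ 2 := by
        rw [euc_norm_sq, euc_norm_sq, Fintype.sum_sum_type]
        simp [hxco]
      have h3 := congrArg Real.sqrt this
      rwa [Real.sqrt_sq (norm_nonneg _), Real.sqrt_sq (norm_nonneg _)] at h3
    have hTx : ‖LinearMap.toContinuousLinearMap (Matrix.toEuclideanLin E) y‖ = ‖T x‖ := by
      have hval : LinearMap.toContinuousLinearMap (Matrix.toEuclideanLin E) y
          = (WithLp.equiv 2 (Fin k → ℝ)).symm (E *ᵥ (fun i => y i)) := by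
        rw [LinearMap.coe_toContinuousLinearMap']
        rw [Matrix.toEuclideanLin_apply]
        rfl
      have : ‖T x‖ ^ 2 = ‖LinearMap.toContinuousLinearMap (Matrix.toEuclideanLin E) y‖ ^ 2 := by
        rw [hval, euc_norm_sq, euc_norm_sq, Fintype.sum_sum_type]
        have hzero : ∀ i : Fin m, T x (Sum.inl i) = 0 := by
          intro i
          rw [hcoord x (Sum.inl i)]
          simp only [Sum.elim_inl]
          have hz : (fun j => x (Sum.inr j)) = (0 : Fin k → ℝ) := by
            funext j; rw [hxco]; rfl
          rw [hz, Matrix.mulVec_zero]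
          rfl
        have hinr : ∀ j : Fin k, T x (Sum.inr j) = (E *ᵥ (fun i => y i)) j := by
          intro j
          rw [hcoord x (Sum.inr j)]
          simp only [Sum.elim_inr]
          rfl
        simp [hzero, hinr, WithLp.equiv_symm_apply, PiLp.toLp_apply]
      have h3 := congrArg Real.sqrt this.symm
      rwa [Real.sqrt_sq (norm_nonneg _), Real.sqrt_sq (norm_nonneg _)] at h3
    rw [hTx, ← hxnorm]
    exact T.le_opNorm x


section Part3

/-- lower bound `c‖x‖ ≤ ‖Tx - μx‖` when `T` is diagonal in an onb with eigenvalues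
at distance `≥ c` from `μ`. -/
lemma onb_diag_norm_lower {ι : Type*} [Fintype ι] [DecidableEq ι]
    {F : Type*} [NormedAddCommGroup F] [InnerProductSpace ℝ F]
    (b : OrthonormalBasis ι ℝ F) (T : F →ₗ[ℝ] F) (f : ι → ℝ)
    (hT : ∀ i, T (b i) = f i • b i) (μ c : ℝ) (hc : 0 ≤ c)
    (hf : ∀ i, c ≤ |f i - μ|) (x : F) :
    c * ‖x‖ ≤ ‖T x - μ • x‖ := by
  have key : (c * ‖x‖) ^ 2 ≤ ‖T x - μ • x‖ ^ 2 := by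
    rw [mul_pow, onb_norm_sq_repr b x, onb_norm_sq_repr b (T x - μ • x), Finset.mul_sum]
    refine Finset.sum_le_sum fun i _ => ?_
    have hrep : b.repr (T x - μ • x) i = (f i - μ) * b.repr x i := by
      rw [map_sub, _root_.map_smul]
      have := onb_repr_diag b T f hT x i
      simp only [PiLp.sub_apply, PiLp.smul_apply, this, smul_eq_mul]
      ring
    rw [hrep, mul_pow]
    have h1 : c ^ 2 ≤ (f i - μ) ^ 2 := by
      have := pow_le_pow_left₀ hc (hf i) 2
      rwa [sq_abs] at this
    exact mul_le_mul_of_nonneg_right h1 (sq_nonneg _)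
  have h2 := Real.sqrt_le_sqrt key
  rwa [Real.sqrt_sq (mul_nonneg hc (norm_nonneg _)), Real.sqrt_sq (norm_nonneg _)] at h2

lemma eigenvector_of_mem_spectrum {n : Type*} [Fintype n] [DecidableEq n]
    {M : Matrix n n ℝ} {μ : ℝ} (hμ : μ ∈ spectrum ℝ M) :
    ∃ v : n → ℝ, v ≠ 0 ∧ M *ᵥ v = μ • v := by
  rw [← AlgEquiv.spectrum_eq (Matrix.toLinAlgEquiv' (R := ℝ) (n := n)) M] at hμ
  have he : Module.End.HasEigenvalue (Matrix.toLinAlgEquiv' M) μ :=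
    Module.End.hasEigenvalue_iff_mem_spectrum.mpr hμ
  obtain ⟨v, hv⟩ := he.exists_hasEigenvector
  refine ⟨v, hv.2, ?_⟩
  rw [← Matrix.toLinAlgEquiv'_apply]
  exact hv.apply_eq_smul

lemma part3 {m k : ℕ} (d : Fin m → ℝ) (X : Matrix (Fin k) (Fin k) ℝ)
    (E : Matrix (Fin k) (Fin m) ℝ) (hX : X.IsHermitian)
    (B : Matrix (Fin m ⊕ Fin k) (Fin m ⊕ Fin k) ℝ)
    (hB : B = Matrix.fromBlocks (Matrix.diagonal d) Eᵀ E X)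
    (δ : ℝ) (hδ : 2 * matrixOpNorm E < δ)
    (hgap : ∀ i : Fin m, ∀ ν ∈ spectrum ℝ X, δ ≤ |d i - ν|)
    (μ : ℝ) (hμ : μ ∈ spectrum ℝ B)
    (hclose : ∃ i : Fin m, |μ - d i| ≤ matrixOpNorm E) :
    ∃ i : Fin m, |μ - d i| ≤ matrixOpNorm E ^ 2 / (δ - 2 * matrixOpNorm E) := by
  set ε := matrixOpNorm E with hε
  have hε0 : 0 ≤ ε := matrixOpNorm_nonneg E
  obtain ⟨i₀, hi₀⟩ := hclose
  obtain ⟨v, hv0, hveq⟩ := eigenvector_of_mem_spectrum hμ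
  set u : Fin m → ℝ := fun i => v (Sum.inl i) with hu
  set w : Fin k → ℝ := fun j => v (Sum.inr j) with hw
  have hvl : ∀ i, (Matrix.diagonal d *ᵥ u) i + (Eᵀ *ᵥ w) i = μ * u i := by
    intro i
    have h1 := congrFun hveq (Sum.inl i)
    rw [hB, Matrix.fromBlocks_mulVec] at h1
    simp [Matrix.add_apply] at h1
    exact h1
  have hvr : ∀ j, (E *ᵥ u) j + (X *ᵥ w) j = μ * w j := by
    intro j
    have h1 := congrFun hveq (Sum.inr j)
    rw [hB, Matrix.fromBlocks_mulVec] at h1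
    simp at h1
    exact h1
  -- Euclidean versions
  set uE : EuclideanSpace ℝ (Fin m) := (WithLp.equiv 2 (Fin m → ℝ)).symm u with huE
  set wE : EuclideanSpace ℝ (Fin k) := (WithLp.equiv 2 (Fin k → ℝ)).symm w with hwE
  set c := δ - ε with hc
  have hcpos : 0 < c := by
    have : ε ≤ 2 * ε := by linarith
    simp only [hc]; linarith
  -- lower bound on X block
  have hXlow : c * ‖wE‖ ≤ ε * ‖uE‖ := by
    have hdiag : ∀ i, Matrix.toEuclideanLin X (hX.eigenvectorBasis i)
        = hX.eigenvalues i • hX.eigenvectorBasis i := by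
      intro i
      apply (WithLp.equiv 2 _).injective
      simp only [WithLp.equiv_apply]
      rw [Matrix.ofLp_toEuclideanLin_apply]
      funext j
      have := congrFun (hX.mulVec_eigenvectorBasis i) j
      simpa using this
    have hfgap : ∀ i, c ≤ |hX.eigenvalues i - μ| := by
      intro i
      have h1 := hgap i₀ (hX.eigenvalues i) (hX.eigenvalues_mem_spectrum_real i)
      have h2 : |d i₀ - hX.eigenvalues i| ≤ |d i₀ - μ| + |μ - hX.eigenvalues i| := by
        have := abs_sub_le (d i₀) μ (hX.eigenvalues i)
        linarith
      have h3 : |d i₀ - μ| = |μ - d i₀| := abs_sub_comm _ _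
      have h4 : |μ - hX.eigenvalues i| = |hX.eigenvalues i - μ| := abs_sub_comm _ _
      rw [h3, h4] at h2
      simp only [hc]
      linarith [hi₀]
    have hlow := onb_diag_norm_lower hX.eigenvectorBasis (Matrix.toEuclideanLin X)
      hX.eigenvalues hdiag μ c hcpos.le hfgap wE
    have hsub : Matrix.toEuclideanLin X wE - μ • wE
        = (WithLp.equiv 2 (Fin k → ℝ)).symm (X *ᵥ w - μ • w) := by
      apply (WithLp.equiv 2 _).injective
      funext j
      simp only [Matrix.toEuclideanLin_apply, WithLp.equiv_apply, WithLp.equiv_symm_apply, PiLp.toLp_apply,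
        PiLp.sub_apply, PiLp.smul_apply, Pi.sub_apply, Pi.smul_apply, smul_eq_mul]
      rfl
    have hmv : X *ᵥ w - μ • w = -(E *ᵥ u) := by
      funext j
      have := hvr j
      simp only [Pi.sub_apply, Pi.neg_apply, Pi.smul_apply, smul_eq_mul]
      linarith
    rw [hsub, hmv] at hlow
    have hnorm : ‖(WithLp.equiv 2 (Fin k → ℝ)).symm (-(E *ᵥ u))‖
        = ‖(WithLp.equiv 2 (Fin k → ℝ)).symm (E *ᵥ u)‖ := by
      have : (WithLp.equiv 2 (Fin k → ℝ)).symm (-(E *ᵥ u))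
          = -((WithLp.equiv 2 (Fin k → ℝ)).symm (E *ᵥ u)) := rfl
      rw [this, norm_neg]
    rw [hnorm] at hlow
    calc c * ‖wE‖ ≤ ‖(WithLp.equiv 2 (Fin k → ℝ)).symm (E *ᵥ u)‖ := hlow
      _ ≤ ε * ‖uE‖ := matrix_mulVec_norm_le E u
  -- u is nonzero
  have hwbound : ‖wE‖ ≤ ε / c * ‖uE‖ := by
    rw [div_mul_eq_mul_div, le_div_iff₀ hcpos]
    linarith [hXlow]
  have hupos : 0 < ‖uE‖ := by
    rcases (norm_nonneg uE).lt_or_eq with h | h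
    · exact h
    · exfalso
      have huE0 : uE = 0 := norm_eq_zero.mp h.symm
      have hwE0 : wE = 0 := by
        have h1 : ‖wE‖ ≤ 0 := by
          have := hwbound
          rw [huE0, norm_zero, mul_zero] at this
          exact this
        exact norm_eq_zero.mp (le_antisymm h1 (norm_nonneg _))
      apply hv0
      funext s
      cases s with
      | inl i =>
        have : uE i = 0 := by rw [huE0]; rfl
        exact this
      | inr j =>
        have : wE j = 0 := by rw [hwE0]; rfl
        exact this
  -- diagonal block lower bound
  obtain ⟨i₁, -, hmin⟩ := Finset.exists_min_image Finset.univ (fun i => |μ - d i|)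
    ⟨i₀, Finset.mem_univ i₀⟩
  set t := |μ - d i₁| with ht
  have ht0 : 0 ≤ t := abs_nonneg _
  have hDlow : t * ‖uE‖ ≤ ε * ‖wE‖ := by
    have hmv : Matrix.diagonal d *ᵥ u - μ • u = -(Eᵀ *ᵥ w) := by
      funext i
      have := hvl i
      simp only [Pi.sub_apply, Pi.neg_apply, Pi.smul_apply, smul_eq_mul]
      linarith
    have hsq : (t * ‖uE‖) ^ 2
        ≤ ‖(WithLp.equiv 2 (Fin m → ℝ)).symm (Matrix.diagonal d *ᵥ u - μ • u)‖ ^ 2 := by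
      rw [mul_pow, euc_norm_sq, euc_norm_sq, Finset.mul_sum]
      refine Finset.sum_le_sum fun i _ => ?_
      have hco : ((WithLp.equiv 2 (Fin m → ℝ)).symm (Matrix.diagonal d *ᵥ u - μ • u)) i
          = (d i - μ) * u i := by
        have : (Matrix.diagonal d *ᵥ u) i = d i * u i := by
          simp [Matrix.mulVec_diagonal]
        simp only [WithLp.equiv_symm_apply, PiLp.toLp_apply, Pi.sub_apply, Pi.smul_apply, smul_eq_mul, this]
        ring
      have hcu : (uE : EuclideanSpace ℝ (Fin m)) i = u i := rfl
      rw [hco, hcu, mul_pow]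
      have h1 : t ^ 2 ≤ (d i - μ) ^ 2 := by
        have h2 : t ≤ |d i - μ| := by
          have := hmin i (Finset.mem_univ i)
          rwa [abs_sub_comm μ (d i)] at this
        have h5 : t ^ 2 ≤ |d i - μ| ^ 2 := pow_le_pow_left₀ ht0 h2 2
        rwa [sq_abs (d i - μ)] at h5
      exact mul_le_mul_of_nonneg_right h1 (sq_nonneg _)
    have h3 := Real.sqrt_le_sqrt hsq
    rw [Real.sqrt_sq (mul_nonneg ht0 (norm_nonneg _)), Real.sqrt_sq (norm_nonneg _)] at h3
    calc t * ‖uE‖ ≤ ‖(WithLp.equiv 2 (Fin m → ℝ)).symm (Matrix.diagonal d *ᵥ u - μ • u)‖ := h3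
      _ = ‖(WithLp.equiv 2 (Fin m → ℝ)).symm (Eᵀ *ᵥ w)‖ := by
          rw [hmv]
          have : (WithLp.equiv 2 (Fin m → ℝ)).symm (-(Eᵀ *ᵥ w))
              = -((WithLp.equiv 2 (Fin m → ℝ)).symm (Eᵀ *ᵥ w)) := rfl
          rw [this, norm_neg]
      _ ≤ matrixOpNorm Eᵀ * ‖wE‖ := matrix_mulVec_norm_le Eᵀ w
      _ = ε * ‖wE‖ := by rw [matrixOpNorm_transpose]
  -- combine
  have hchain : t * ‖uE‖ ≤ ε ^ 2 / c * ‖uE‖ := by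
    calc t * ‖uE‖ ≤ ε * ‖wE‖ := hDlow
      _ ≤ ε * (ε / c * ‖uE‖) := mul_le_mul_of_nonneg_left hwbound hε0
      _ = ε ^ 2 / c * ‖uE‖ := by ring
  have htle : t ≤ ε ^ 2 / c := le_of_mul_le_mul_right hchain hupos
  refine ⟨i₁, ?_⟩
  calc |μ - d i₁| = t := rfl
    _ ≤ ε ^ 2 / c := htle
    _ ≤ ε ^ 2 / (δ - 2 * ε) := by
        apply div_le_div_of_nonneg_left (sq_nonneg ε) (by linarith) (by simp only [hc]; linarith)
  -- done

end Part3

/-- Block perturbation: for `B = [[D,Eᵀ],[E,X]]` with `D = diagonal d` and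
`B₀ = [[D,0],[0,X]]`, one has `‖B − B₀‖ = ‖E‖`, Weyl's inequality
`|λ_j(B) − λ_j(B₀)| ≤ ‖E‖` for the sorted eigenvalues, and if the spectra of `D` and `X`
are separated by a gap `δ > 2‖E‖`, then any eigenvalue of `B` within `‖E‖` of `spec(D)` is
within `‖E‖²/(δ − 2‖E‖)` of an entry of `d`. -/
theorem block_eigenvalue_perturbation {m k : ℕ}
    (d : Fin m → ℝ) (X : Matrix (Fin k) (Fin k) ℝ) (E : Matrix (Fin k) (Fin m) ℝ)
    (hX : X.IsHermitian)
    (B B₀ : Matrix (Fin m ⊕ Fin k) (Fin m ⊕ Fin k) ℝ)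
    (hB : B = Matrix.fromBlocks (Matrix.diagonal d) Eᵀ E X)
    (hB₀ : B₀ = Matrix.fromBlocks (Matrix.diagonal d) 0 0 X)
    (hBh : B.IsHermitian) (hB₀h : B₀.IsHermitian) :
    ‖Matrix.toEuclideanCLM (𝕜 := ℝ) (B - B₀)‖ = matrixOpNorm E ∧
    (∀ j : Fin (Fintype.card (Fin m ⊕ Fin k)),
      |sortedEigenvalues hBh j - sortedEigenvalues hB₀h j| ≤ matrixOpNorm E) ∧
    (∀ δ : ℝ, 2 * matrixOpNorm E < δ →
      (∀ i : Fin m, ∀ ν ∈ spectrum ℝ X, δ ≤ |d i - ν|) →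
      ∀ μ ∈ spectrum ℝ B, (∃ i : Fin m, |μ - d i| ≤ matrixOpNorm E) →
        ∃ i : Fin m, |μ - d i| ≤ matrixOpNorm E ^ 2 / (δ - 2 * matrixOpNorm E)) := by
  have hBB0 : B - B₀ = Matrix.fromBlocks (0 : Matrix (Fin m) (Fin m) ℝ) Eᵀ E
      (0 : Matrix (Fin k) (Fin k) ℝ) := by
    rw [hB, hB₀]
    ext s t
    rcases s with i | i <;> rcases t with j | j <;>
      simp [Matrix.sub_apply, Matrix.fromBlocks]
  have h1 : ‖Matrix.toEuclideanCLM (𝕜 := ℝ) (B - B₀)‖ = matrixOpNorm E := by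
    rw [hBB0]; exact block_opNorm E
  refine ⟨h1, ?_, ?_⟩
  · intro j
    have w1 := weyl_one_sided hBh hB₀h j
    have w2 := weyl_one_sided hB₀h hBh j
    have hsym : ‖Matrix.toEuclideanCLM (𝕜 := ℝ) (B₀ - B)‖
        = ‖Matrix.toEuclideanCLM (𝕜 := ℝ) (B - B₀)‖ := by
      have hneg : B₀ - B = -(B - B₀) := (neg_sub B B₀).symm
      rw [hneg, map_neg, norm_neg]
    rw [h1] at w1
    rw [hsym, h1] at w2
    rw [abs_sub_le_iff]
    constructor <;> linarith
  · intro δ hδ hgap μ hμ hclose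
    exact part3 d X E hX B hB δ hδ hgap μ hμ hclose
end
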